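/- arXiv:math/0507238 — 8 statements merged into one kernel-verified Lean document; each statement's English description precedes it below -/
import Mathlib

section
/- For monomial ideals I and J in k[x_1,...,x_n], the polarization of their intersection equals the intersection of their polarizations: P(I ∩ J) = P(I) ∩ P(J). -/
open MvPolynomial

/-- The monomial `x_1^{a_1} ⋯ x_n^{a_n}` with exponent vector `a`. -/
noncomputable def mon (k : Type) [Field k] {n : ℕ} (a : Fin n → ℕ) :
    MvPolynomial (Fin n) k :=
  ∏ i, X i ^ a i

/-- The polarization of the monomial with exponent vector `a`: the square-free monomial
`∏_i ∏_{j < a_i} x_{i,j}` in the doubly-indexed variables `x_{i,j}`, `0 ≤ j ≤ m`. -/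
noncomputable def polar (k : Type) [Field k] (m : ℕ) {n : ℕ} (a : Fin n → ℕ) :
    MvPolynomial (Fin n × Fin (m + 1)) k :=
  ∏ i, ∏ j ∈ Finset.univ.filter fun j : Fin (m + 1) => (j : ℕ) < a i, X (i, j)


/-- The monomial ideal generated by the monomials with exponent vectors `A t`. -/
noncomputable def monIdeal (k : Type) [Field k] {n q : ℕ} (A : Fin q → Fin n → ℕ) :
    Ideal (MvPolynomial (Fin n) k) :=
  Ideal.span (Set.range fun t => mon k (A t))

/-- The polarization of the monomial ideal generated by the monomials `A t`:
the square-free monomial ideal generated by the polarizations of the generators. -/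
noncomputable def polarIdeal (k : Type) [Field k] (m : ℕ) {n q : ℕ}
    (A : Fin q → Fin n → ℕ) : Ideal (MvPolynomial (Fin n × Fin (m + 1)) k) :=
  Ideal.span (Set.range fun t => polar k m (A t))

/-- The intersection of two monomial ideals is generated by the pairwise sups (lcm's)
of the exponent vectors. -/
lemma monomial_span_inf {σ : Type*} (k : Type) [Field k] {q q' : ℕ}
    (u : Fin q → (σ →₀ ℕ)) (v : Fin q' → (σ →₀ ℕ)) :
    Ideal.span (Set.range fun t => (monomial (u t) (1:k))) ⊓
      Ideal.span (Set.range fun t => (monomial (v t) (1:k))) =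
    Ideal.span (Set.range fun p : Fin q × Fin q' => (monomial (u p.1 ⊔ v p.2) (1:k))) := by
  have h1 : (Set.range fun t => (monomial (u t) (1:k))) =
      (fun d => monomial d (1:k)) '' (Set.range u) := by
    rw [← Set.range_comp]; rfl
  have h2 : (Set.range fun t => (monomial (v t) (1:k))) =
      (fun d => monomial d (1:k)) '' (Set.range v) := by
    rw [← Set.range_comp]; rfl
  have h3 : (Set.range fun p : Fin q × Fin q' => (monomial (u p.1 ⊔ v p.2) (1:k))) =
      (fun d => monomial d (1:k)) '' (Set.range fun p : Fin q × Fin q' => u p.1 ⊔ v p.2) := by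
    rw [← Set.range_comp]; rfl
  rw [h1, h2, h3]
  ext x
  rw [Ideal.mem_inf, mem_ideal_span_monomial_image, mem_ideal_span_monomial_image,
    mem_ideal_span_monomial_image]
  constructor
  · rintro ⟨ha, hb⟩ xi hxi
    obtain ⟨-, ⟨t, rfl⟩, hle⟩ := ha xi hxi
    obtain ⟨-, ⟨s, rfl⟩, hle'⟩ := hb xi hxi
    exact ⟨u t ⊔ v s, ⟨(t, s), rfl⟩, sup_le hle hle'⟩
  · intro h
    constructor
    · intro xi hxi
      obtain ⟨-, ⟨p, rfl⟩, hle⟩ := h xi hxi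
      exact ⟨u p.1, ⟨p.1, rfl⟩, le_trans le_sup_left hle⟩
    · intro xi hxi
      obtain ⟨-, ⟨p, rfl⟩, hle⟩ := h xi hxi
      exact ⟨v p.2, ⟨p.2, rfl⟩, le_trans le_sup_right hle⟩

lemma mon_eq (k : Type) [Field k] {n : ℕ} (a : Fin n → ℕ) :
    mon k a = monomial (Finsupp.equivFunOnFinite.symm a) (1:k) := by
  rw [mon, monomial_eq, C_1, one_mul, Finsupp.prod_fintype]
  · rfl
  · intro i; exact pow_zero _

lemma polar_eq (k : Type) [Field k] (m : ℕ) {n : ℕ} (a : Fin n → ℕ) :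
    polar k m a = monomial (Finsupp.equivFunOnFinite.symm
      fun p : Fin n × Fin (m+1) => if (p.2 : ℕ) < a p.1 then 1 else 0) (1:k) := by
  rw [polar, monomial_eq, C_1, one_mul, Finsupp.prod_fintype]
  · rw [Fintype.prod_prod_type]
    refine Finset.prod_congr rfl fun i _ => ?_
    rw [Finset.prod_filter]
    refine Finset.prod_congr rfl fun j _ => ?_
    simp [Finsupp.coe_equivFunOnFinite_symm, pow_ite]
  · intro i; exact pow_zero _

lemma symm_sup {σ : Type*} [Fintype σ] (f g : σ → ℕ) :
    Finsupp.equivFunOnFinite.symm f ⊔ Finsupp.equivFunOnFinite.symm g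
      = Finsupp.equivFunOnFinite.symm (fun i => max (f i) (g i)) := by
  ext i
  simp [Finsupp.sup_apply]

/-- `𝒫(I ∩ J) = 𝒫(I) ∩ 𝒫(J)` for monomial ideals.  The intersection
`I ∩ J` is generated by the lcm's of pairs of generators (first conjunct), and the
ideal generated by the polarizations of these lcm's is `𝒫(I) ∩ 𝒫(J)` (second
conjunct). -/
theorem polarIdeal_inf (k : Type) [Field k] (m n q q' : ℕ)
    (A : Fin q → Fin n → ℕ) (B : Fin q' → Fin n → ℕ)
    (hA : ∀ t i, A t i ≤ m + 1) (hB : ∀ t i, B t i ≤ m + 1) :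
    monIdeal k A ⊓ monIdeal k B =
      Ideal.span (Set.range fun p : Fin q × Fin q' =>
        mon k (fun i => max (A p.1 i) (B p.2 i))) ∧
    Ideal.span (Set.range fun p : Fin q × Fin q' =>
        polar k m (fun i => max (A p.1 i) (B p.2 i))) =
      polarIdeal k m A ⊓ polarIdeal k m B := by
  constructor
  · simp only [monIdeal, mon_eq]
    rw [monomial_span_inf k (fun t => Finsupp.equivFunOnFinite.symm (A t))
      (fun t => Finsupp.equivFunOnFinite.symm (B t))]
    simp only [symm_sup]
  · simp only [polarIdeal, polar_eq]
    rw [monomial_span_inf k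
      (fun t => Finsupp.equivFunOnFinite.symm
        fun p : Fin n × Fin (m+1) => if (p.2 : ℕ) < A t p.1 then 1 else 0)
      (fun t => Finsupp.equivFunOnFinite.symm
        fun p : Fin n × Fin (m+1) => if (p.2 : ℕ) < B t p.1 then 1 else 0)]
    have hmax : ∀ (a b j : ℕ), max (if j < a then 1 else 0) (if j < b then 1 else 0)
        = if j < max a b then (1:ℕ) else 0 := by
      intro a b j
      rcases lt_or_ge j a with h1 | h1 <;> rcases lt_or_ge j b with h2 | h2 <;>
        split_ifs <;> omega
    simp only [symm_sup, hmax]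
end

section
/- If p = (x_{i_1},...,x_{i_r}) is a monomial prime ideal containing a monomial ideal I, then the prime ideal P(p) = (x_{i_1,1},...,x_{i_r,1}) contains the polarization P(I); moreover if p is minimal over I, then P(p) is minimal over P(I). -/
open MvPolynomial


lemma sub_aeval_mem {σ : Type*} {k : Type} [Field k] (S : Set σ) [DecidablePred (· ∈ S)]
    (p : MvPolynomial σ k) :
    p - aeval (fun i => if i ∈ S then 0 else X i) p ∈
      Ideal.span (X '' S : Set (MvPolynomial σ k)) := by
  induction p using MvPolynomial.induction_on with
  | C a => simp
  | add p q hp hq =>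
      rw [map_add, add_sub_add_comm]
      exact Ideal.add_mem _ hp hq
  | mul_X p i hp =>
      rw [map_mul, aeval_X]
      by_cases h : i ∈ S
      · simp only [if_pos h, mul_zero, sub_zero]
        exact Ideal.mul_mem_left _ p (Ideal.subset_span ⟨i, h, rfl⟩)
      · simp only [if_neg h]
        rw [← sub_mul]
        exact Ideal.mul_mem_right _ _ hp

lemma span_X_isPrime {σ : Type*} {k : Type} [Field k] (S : Set σ) :
    (Ideal.span (X '' S : Set (MvPolynomial σ k))).IsPrime := by
  classical
  have hker : Ideal.span (X '' S : Set (MvPolynomial σ k)) =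
      RingHom.ker (aeval (R := k) (fun i => if i ∈ S then 0 else X i) :
        MvPolynomial σ k →ₐ[k] MvPolynomial σ k) := by
    apply le_antisymm
    · rw [Ideal.span_le]
      rintro _ ⟨i, hi, rfl⟩
      simp [RingHom.mem_ker, hi]
    · intro p hp
      have h := sub_aeval_mem S p
      rw [show (aeval (fun i => if i ∈ S then 0 else X i)) p = 0 from hp, sub_zero] at h
      exact h
  rw [hker]
  exact RingHom.ker_isPrime _

lemma X_mem_span_X_iff {σ : Type*} {k : Type} [Field k] {S : Set σ} {v : σ} :
    (X v : MvPolynomial σ k) ∈ Ideal.span (X '' S : Set (MvPolynomial σ k)) ↔ v ∈ S := by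
  rw [mem_ideal_span_X_image]
  constructor
  · intro h
    obtain ⟨i, hi, hne⟩ := h (Finsupp.single v 1) (by simp [support_X])
    rcases eq_or_ne i v with rfl | hiv
    · exact hi
    · simp [Finsupp.single_apply, (Ne.symm hiv)] at hne
  · intro hv mm hm
    rw [support_X, Finset.mem_singleton] at hm
    subst hm
    exact ⟨v, hv, by simp⟩

lemma mem_of_dvd_mem {R : Type*} [CommRing R] {I : Ideal R} {x y : R}
    (hx : x ∈ I) (h : x ∣ y) : y ∈ I := by
  obtain ⟨c, rfl⟩ := h
  exact Ideal.mul_mem_right _ _ hx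

lemma X_dvd_mon {k : Type} [Field k] {n : ℕ} {a : Fin n → ℕ} {i : Fin n} (h : a i ≠ 0) :
    (X i : MvPolynomial (Fin n) k) ∣ mon k a :=
  dvd_trans (dvd_pow_self _ h) (Finset.dvd_prod_of_mem _ (Finset.mem_univ i))

lemma X_dvd_polar {k : Type} [Field k] {m n : ℕ} {a : Fin n → ℕ} {i : Fin n} (h : a i ≠ 0) :
    (X (i, (0 : Fin (m + 1))) : MvPolynomial (Fin n × Fin (m + 1)) k) ∣ polar k m a := by
  refine dvd_trans ?_ (Finset.dvd_prod_of_mem _ (Finset.mem_univ i))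
  exact Finset.dvd_prod_of_mem _ (by simpa using Nat.pos_of_ne_zero h)

/-- From membership of `mon k a` in a variable span, extract a variable dividing it. -/
lemma exists_of_mon_mem {k : Type} [Field k] {n : ℕ} {a : Fin n → ℕ} {S : Set (Fin n)}
    (h : mon k a ∈ Ideal.span (X '' S : Set (MvPolynomial (Fin n) k))) :
    ∃ i ∈ S, a i ≠ 0 := by
  have hP := span_X_isPrime (k := k) S
  rw [mon, hP.prod_mem_iff] at h
  obtain ⟨i, -, hi⟩ := h
  have hX := hP.mem_of_pow_mem _ hi
  refine ⟨i, X_mem_span_X_iff.mp hX, ?_⟩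
  intro h0
  rw [h0, pow_zero] at hi
  exact hP.ne_top (Ideal.eq_top_of_isUnit_mem _ hi isUnit_one)

/-- if `p = (x_{i₁},…,x_{i_r})` is a monomial prime containing the
monomial ideal `I`, then `𝒫(p) = (x_{i₁,1},…,x_{i_r,1})` is a prime containing
`𝒫(I)`; moreover if `p` is minimal over `I` then `𝒫(p)` is minimal over `𝒫(I)`. -/
theorem polar_prime (k : Type) [Field k] (m n q : ℕ) (A : Fin q → Fin n → ℕ)
    (hA : ∀ t i, A t i ≤ m + 1) (s : Finset (Fin n))
    (hle : monIdeal k A ≤ Ideal.span ((fun i => (X i : MvPolynomial (Fin n) k)) '' s)) :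
    (Ideal.span ((fun i => (X (i, (0 : Fin (m + 1))) :
          MvPolynomial (Fin n × Fin (m + 1)) k)) '' s)).IsPrime ∧
    polarIdeal k m A ≤
      Ideal.span ((fun i => (X (i, (0 : Fin (m + 1))) :
          MvPolynomial (Fin n × Fin (m + 1)) k)) '' s) ∧
    (Ideal.span ((fun i => (X i : MvPolynomial (Fin n) k)) '' s) ∈
        (monIdeal k A).minimalPrimes →
      Ideal.span ((fun i => (X (i, (0 : Fin (m + 1))) :
          MvPolynomial (Fin n × Fin (m + 1)) k)) '' s) ∈
        (polarIdeal k m A).minimalPrimes) := by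
  classical
  have himg : ((fun i => (X (i, (0 : Fin (m + 1))) :
      MvPolynomial (Fin n × Fin (m + 1)) k)) '' ↑s) =
      X '' ((fun i => (i, (0 : Fin (m + 1)))) '' ↑s) := by
    rw [Set.image_image]
  have himg1 : ((fun i => (X i : MvPolynomial (Fin n) k)) '' ↑s) =
      X '' (↑s : Set (Fin n)) := rfl
  -- each generator of mon ideal is divisible by some variable in s
  have hgen : ∀ t, ∃ i ∈ s, A t i ≠ 0 := by
    intro t
    have : mon k (A t) ∈ Ideal.span ((fun i => (X i : MvPolynomial (Fin n) k)) '' ↑s) :=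
      hle (Ideal.subset_span ⟨t, rfl⟩)
    rw [himg1] at this
    exact exists_of_mon_mem this
  refine ⟨?_, ?_, ?_⟩
  · rw [himg]; exact span_X_isPrime _
  · rw [polarIdeal, Ideal.span_le]
    rintro _ ⟨t, rfl⟩
    obtain ⟨i, hi, hne⟩ := hgen t
    exact mem_of_dvd_mem (Ideal.subset_span ⟨i, hi, rfl⟩) (X_dvd_polar hne)
  · intro hmin
    constructor
    · refine ⟨by rw [himg]; exact span_X_isPrime _, ?_⟩
      rw [polarIdeal, Ideal.span_le]
      rintro _ ⟨t, rfl⟩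
      obtain ⟨i, hi, hne⟩ := hgen t
      exact mem_of_dvd_mem (Ideal.subset_span ⟨i, hi, rfl⟩) (X_dvd_polar hne)
    · rintro Q ⟨hQp, hQge⟩ hQle
      -- S' : indices i in s with X (i,0) ∈ Q
      set S' : Set (Fin n) := {i | i ∈ s ∧ X (i, (0 : Fin (m + 1))) ∈ Q} with hS'
      -- span X '' S' contains monIdeal
      have hmon : monIdeal k A ≤ Ideal.span (X '' S' : Set (MvPolynomial (Fin n) k)) := by
        rw [monIdeal, Ideal.span_le]
        rintro _ ⟨t, rfl⟩
        have hpolarQ : polar k m (A t) ∈ Q := hQge (Ideal.subset_span ⟨t, rfl⟩)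
        rw [polar, hQp.prod_mem_iff] at hpolarQ
        obtain ⟨i, -, hi⟩ := hpolarQ
        rw [hQp.prod_mem_iff] at hi
        obtain ⟨j, hjf, hj⟩ := hi
        have hjQle : (X (i, j) : MvPolynomial (Fin n × Fin (m + 1)) k) ∈
            Ideal.span ((fun i => (X (i, (0 : Fin (m + 1))) :
              MvPolynomial (Fin n × Fin (m + 1)) k)) '' ↑s) := hQle hj
        rw [himg, X_mem_span_X_iff] at hjQle
        obtain ⟨i', hi', heq⟩ := hjQle
        obtain ⟨rfl, rfl⟩ : i' = i ∧ (0 : Fin (m + 1)) = j := Prod.mk.injEq .. ▸ heq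
        simp only [Finset.mem_filter] at hjf
        have hApos : A t i' ≠ 0 := by
          have h2 := hjf.2
          simp only [Fin.val_zero] at h2
          omega
        exact mem_of_dvd_mem (Ideal.subset_span ⟨i', ⟨hi', hj⟩, rfl⟩) (X_dvd_mon hApos)
      have hS'le : Ideal.span (X '' S' : Set (MvPolynomial (Fin n) k)) ≤
          Ideal.span ((fun i => (X i : MvPolynomial (Fin n) k)) '' ↑s) := by
        rw [himg1]
        exact Ideal.span_mono (Set.image_mono (fun i hi => hi.1))
      have heq := hmin.2 ⟨span_X_isPrime S', hmon⟩ hS'le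
      -- now every i ∈ s lies in S'
      rw [Ideal.span_le]
      rintro _ ⟨i, hi, rfl⟩
      have : (X i : MvPolynomial (Fin n) k) ∈ Ideal.span (X '' S') :=
        heq (by rw [himg1]; exact Ideal.subset_span ⟨i, hi, rfl⟩)
      rw [X_mem_span_X_iff] at this
      exact this.2
end

section
/- If p' = (x_{i_1,e_1},...,x_{i_r,e_r}) is a prime ideal generated by polarization variables containing P(I), then p = (x_{i_1},...,x_{i_r}) is a prime containing I. Moreover, if p' has minimal height among primes containing P(I), then p has minimal height among primes containing I. -/
open MvPolynomial

/-- The height of an ideal: the infimum of the heights (in the prime spectrum)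
of the prime ideals containing it. -/
noncomputable def ht {R : Type} [CommRing R] (I : Ideal R) : ℕ∞ :=
  ⨅ p ∈ {p : PrimeSpectrum R | I ≤ p.asIdeal}, Order.height p

section Aux
open scoped Classical

variable {K : Type} [Field K] {σ : Type*}



lemma spanX_eq_ker (s : Set σ) :
    Ideal.span (X '' s : Set (MvPolynomial σ K)) =
      RingHom.ker (aeval (R := K) fun i => if i ∈ s then (0 : MvPolynomial σ K) else X i) := by
  classical
  apply le_antisymm
  · rw [Ideal.span_le]
    rintro _ ⟨i, hi, rfl⟩
    simp [RingHom.mem_ker, hi]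
  · intro x hx
    rw [RingHom.mem_ker] at hx
    rw [mem_ideal_span_X_image]
    by_contra hcon
    push_neg at hcon
    obtain ⟨u, hu, hgood⟩ := hcon
    have hc : coeff u (aeval (R := K)
        (fun i => if i ∈ s then (0 : MvPolynomial σ K) else X i) x) = coeff u x := by
      rw [aeval_def, eval₂_eq, MvPolynomial.coeff_sum]
      have hterm : ∀ v ∈ x.support,
          coeff u (algebraMap K (MvPolynomial σ K) (coeff v x) *
            ∏ i ∈ v.support, (if i ∈ s then (0 : MvPolynomial σ K) else X i) ^ v i) =
          if v = u then coeff u x else 0 := by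
        intro v hv
        by_cases hvs : ∃ i ∈ v.support, i ∈ s
        · obtain ⟨i, hiv, his⟩ := hvs
          have hz : (if i ∈ s then (0 : MvPolynomial σ K) else X i) ^ v i = 0 := by
            rw [if_pos his]
            exact zero_pow (Finsupp.mem_support_iff.mp hiv)
          rw [Finset.prod_eq_zero hiv hz, mul_zero, coeff_zero]
          have hvu : v ≠ u := by
            rintro rfl
            exact (Finsupp.mem_support_iff.mp hiv) (hgood i his)
          rw [if_neg hvu]
        · push_neg at hvs
          have hpr : ∏ i ∈ v.support, (if i ∈ s then (0 : MvPolynomial σ K) else X i) ^ v i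
              = ∏ i ∈ v.support, (X i : MvPolynomial σ K) ^ v i :=
            Finset.prod_congr rfl fun i hi => by rw [if_neg (hvs i hi)]
          rw [hpr]
          have : (algebraMap K (MvPolynomial σ K) (coeff v x)) *
              ∏ i ∈ v.support, (X i : MvPolynomial σ K) ^ v i = monomial v (coeff v x) := by
            rw [monomial_eq]; rfl
          rw [this, coeff_monomial]
          by_cases hvu : v = u
          · subst hvu; simp
          · rw [if_neg hvu, if_neg hvu]
      rw [Finset.sum_congr rfl hterm]
      simp [Finset.sum_ite_eq', hu]
    rw [hx, coeff_zero] at hc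
    exact (Finsupp.mem_support_iff.mp hu) hc.symm

lemma spanX_isPrime (s : Set σ) :
    (Ideal.span (X '' s : Set (MvPolynomial σ K))).IsPrime := by
  rw [spanX_eq_ker]
  exact RingHom.ker_isPrime _







lemma prod_monomial_one {β : Type*} (t : Finset β) (f : β → (σ →₀ ℕ)) :
    ∏ b ∈ t, (monomial (f b) (1 : K)) = monomial (∑ b ∈ t, f b) 1 := by
  classical
  induction t using Finset.induction_on with
  | empty => simp [monomial_zero']
  | insert _ _ hnot ih =>
      rw [Finset.prod_insert hnot, Finset.sum_insert hnot, ih, monomial_mul, one_mul]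

lemma polar_eq_monomial {k : Type} [Field k] (m : ℕ) {n : ℕ} (a : Fin n → ℕ) :
    polar k m a = monomial
      (∑ i : Fin n, ∑ j ∈ Finset.univ.filter fun j : Fin (m + 1) => (j : ℕ) < a i,
        Finsupp.single (i, j) 1) 1 := by
  unfold polar
  rw [← prod_monomial_one]
  apply Finset.prod_congr rfl
  intro i _
  rw [← prod_monomial_one]
  apply Finset.prod_congr rfl
  intro j _
  rw [X]

lemma mon_mem_spanX {k : Type} [Field k] {n : ℕ} (a : Fin n → ℕ) (s : Finset (Fin n))
    {i : Fin n} (his : i ∈ s) (ha : a i ≠ 0) :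
    mon k a ∈ Ideal.span ((fun i => (X i : MvPolynomial (Fin n) k)) '' ↑s) := by
  have hXi : (X i : MvPolynomial (Fin n) k) ∈
      Ideal.span ((fun i => (X i : MvPolynomial (Fin n) k)) '' ↑s) :=
    Ideal.subset_span ⟨i, his, rfl⟩
  have hdvd : (X i : MvPolynomial (Fin n) k) ∣ mon k a :=
    dvd_trans (dvd_pow_self (X i) ha) (Finset.dvd_prod_of_mem _ (Finset.mem_univ i))
  obtain ⟨t, ht⟩ := hdvd
  rw [ht]
  exact Ideal.mul_mem_right t _ hXi

lemma polar_mem_spanX {k : Type} [Field k] (m : ℕ) {n : ℕ} (a : Fin n → ℕ)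
    (s : Finset (Fin n)) (e : Fin n → Fin (m + 1)) {i : Fin n} (his : i ∈ s)
    (ha : (e i : ℕ) < a i) :
    polar k m a ∈ Ideal.span
      ((fun i => (X (i, e i) : MvPolynomial (Fin n × Fin (m + 1)) k)) '' ↑s) := by
  have hXi : (X (i, e i) : MvPolynomial (Fin n × Fin (m + 1)) k) ∈
      Ideal.span ((fun i => (X (i, e i) : MvPolynomial (Fin n × Fin (m + 1)) k)) '' ↑s) :=
    Ideal.subset_span ⟨i, his, rfl⟩
  have hd1 : (X (i, e i) : MvPolynomial (Fin n × Fin (m + 1)) k) ∣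
      ∏ j ∈ Finset.univ.filter fun j : Fin (m + 1) => (j : ℕ) < a i, X (i, j) :=
    Finset.dvd_prod_of_mem _ (by simp [ha])
  have hd2 : (∏ j ∈ Finset.univ.filter fun j : Fin (m + 1) => (j : ℕ) < a i,
      (X (i, j) : MvPolynomial (Fin n × Fin (m + 1)) k)) ∣ polar k m a :=
    Finset.dvd_prod_of_mem _ (Finset.mem_univ i)
  obtain ⟨t, ht⟩ := hd1.trans hd2
  rw [ht]
  exact Ideal.mul_mem_right t _ hXi

lemma mem_spanX_polar {k : Type} [Field k] (m : ℕ) {n : ℕ} (a : Fin n → ℕ)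
    (s : Finset (Fin n)) (e : Fin n → Fin (m + 1))
    (h : polar k m a ∈ Ideal.span
      ((fun i => (X (i, e i) : MvPolynomial (Fin n × Fin (m + 1)) k)) '' ↑s)) :
    ∃ i ∈ s, (e i : ℕ) < a i := by
  have himg : (fun i => (X (i, e i) : MvPolynomial (Fin n × Fin (m + 1)) k)) '' ↑s
      = X '' ((fun i => (i, e i)) '' ↑s) := by
    rw [Set.image_image]
  rw [himg, mem_ideal_span_X_image] at h
  set U := ∑ i : Fin n, ∑ j ∈ Finset.univ.filter fun j : Fin (m + 1) => (j : ℕ) < a i,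
      Finsupp.single ((i, j) : Fin n × Fin (m+1)) (1 : ℕ) with hU
  have hsupp : U ∈ (polar k m a).support := by
    rw [polar_eq_monomial, support_monomial, if_neg one_ne_zero]
    exact Finset.mem_singleton_self _
  obtain ⟨v, hv, hne⟩ := h U hsupp
  obtain ⟨i, his, rfl⟩ := hv
  refine ⟨i, his, ?_⟩
  by_contra hlt
  apply hne
  rw [hU]
  rw [Finsupp.finset_sum_apply]
  apply Finset.sum_eq_zero
  intro i' _
  rw [Finsupp.finset_sum_apply]
  apply Finset.sum_eq_zero
  intro j' hj'
  rw [Finsupp.single_apply]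
  rw [Finset.mem_filter] at hj'
  rw [if_neg]
  rintro h'
  rw [Prod.mk.injEq] at h'
  obtain ⟨rfl, rfl⟩ := h'
  exact hlt hj'.2



/-- Coquand–Lombardi style collapsing lemma: if elements `x i` separate a chain of primes,
they are algebraically independent over the base field. -/
lemma cl_algebraicIndependent {R : Type*} [CommRing R] [Algebra K R] :
    ∀ (n : ℕ) (p : Fin (n + 1) → Ideal R), (∀ i, (p i).IsPrime) → Monotone p →
    ∀ (x : Fin n → R), (∀ i : Fin n, x i ∈ p i.succ) → (∀ i : Fin n, x i ∉ p i.castSucc) →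
    ∀ Q : MvPolynomial (Fin n) K, aeval x Q ∈ p 0 → Q = 0 := by
  intro n
  induction n with
  | zero =>
      intro p hp hmono x hx1 hx2 Q hQ
      obtain ⟨c, rfl⟩ := (C_surjective (Fin 0)) Q
      rw [aeval_C] at hQ
      by_contra hc
      have hc0 : c ≠ 0 := fun h => hc (by rw [h, map_zero])
      have : IsUnit (algebraMap K R c) := (isUnit_iff_ne_zero.mpr hc0).map _
      exact (hp 0).ne_top ((p 0).eq_top_of_isUnit_mem hQ this)
  | succ n ih =>
      intro p hp hmono x hx1 hx2 Q hQ
      by_contra hQ0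
      -- pass to polynomial in the first variable
      set P : Polynomial (MvPolynomial (Fin n) K) := finSuccEquiv K n Q with hP
      have hPne : P ≠ 0 := by
        simp only [hP, ne_eq, EmbeddingLike.map_eq_zero_iff]
        exact hQ0
      set k0 := P.natTrailingDegree
      have hdvd : Polynomial.X ^ k0 ∣ P := by
        rw [Polynomial.X_pow_dvd_iff]
        exact fun d hd => Polynomial.coeff_eq_zero_of_lt_natTrailingDegree hd
      obtain ⟨P', hP'⟩ := hdvd
      have hq0 : P'.coeff 0 ≠ 0 := by
        have : P.coeff k0 = P'.coeff 0 := by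
          rw [hP']
          simpa using Polynomial.coeff_X_pow_mul P' k0 0
        rw [← this]
        exact Polynomial.trailingCoeff_nonzero_iff_nonzero.mpr hPne
      set q0 := P'.coeff 0 with hq0def
      have hdvd2 : Polynomial.X ∣ (P' - Polynomial.C q0) := by
        rw [Polynomial.X_dvd_iff]
        simp [hq0def]
      obtain ⟨P2, hP2⟩ := hdvd2
      have hP'eq : P' = Polynomial.C q0 + Polynomial.X * P2 := by
        rw [← hP2]; ring
      -- evaluation bridge
      set g : Polynomial (MvPolynomial (Fin n) K) →+* R :=
        Polynomial.eval₂RingHom (↑(aeval (fun i => x i.succ) : MvPolynomial (Fin n) K →ₐ[K] R))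
          (x 0) with hg
      have hbridge : ∀ QQ : MvPolynomial (Fin (n+1)) K, aeval x QQ = g (finSuccEquiv K n QQ) := by
        intro QQ
        induction QQ using MvPolynomial.induction_on with
        | C a => simp [hg, finSuccEquiv_apply]
        | add u v hu hv => simp only [map_add, hu, hv]
        | mul_X u i hu =>
            rw [map_mul, map_mul, hu]
            congr 1
            refine Fin.cases ?_ (fun j => ?_) i
            · rw [finSuccEquiv_X_zero]
              simp [hg]
            · rw [finSuccEquiv_X_succ]
              simp [hg]
      have hev : aeval x Q = (x 0) ^ k0 *
          (aeval (fun i => x i.succ) q0 + x 0 * g P2) := by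
        rw [hbridge Q, ← hP, hP', hP'eq]
        simp [hg]
      -- now descend
      have h0 : (x 0) ^ k0 * (aeval (fun i => x i.succ) q0 + x 0 * g P2) ∈ p 0 := hev ▸ hQ
      have hx00 : x 0 ∉ p 0 := by
        have := hx2 0
        simpa using this
      have hmem : aeval (fun i => x i.succ) q0 + x 0 * g P2 ∈ p 0 := by
        rcases (hp 0).mem_or_mem h0 with h | h
        · exact absurd ((hp 0).mem_of_pow_mem _ h) hx00
        · exact h
      have hx01 : x 0 ∈ p 1 := by
        have := hx1 0
        simpa using this
      have hq0mem : aeval (fun i => x i.succ) q0 ∈ p 1 := by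
        have h1 : aeval (fun i => x i.succ) q0 + x 0 * g P2 ∈ p 1 :=
          hmono (by norm_num : (0 : Fin (n+2)) ≤ 1) hmem
        have h2 : x 0 * g P2 ∈ p 1 := Ideal.mul_mem_right _ _ hx01
        simpa using sub_mem h1 h2
      refine hq0 (ih (fun i => p i.succ) (fun i => hp _) (fun a b hab => hmono (by simpa)) 
        (fun i => x i.succ) (fun i => ?_) (fun i => ?_) q0 hq0mem)
      · exact hx1 i.succ
      · have h := hx2 i.succ
        rwa [← Fin.succ_castSucc] at h



lemma exists_algebraic_relation {σ : Type*} [Fintype σ] {N : ℕ} (hN : Fintype.card σ = N)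
    (x : Fin (N + 1) → MvPolynomial σ K) :
    ∃ Q : MvPolynomial (Fin (N + 1)) K, Q ≠ 0 ∧ aeval x Q = 0 := by
  classical
  set d : ℕ := 1 + ∑ i, (x i).totalDegree with hd
  have hdle : ∀ i, (x i).totalDegree ≤ d := by
    intro i
    have : (x i).totalDegree ≤ ∑ i, (x i).totalDegree :=
      Finset.single_le_sum (f := fun i => (x i).totalDegree) (fun _ _ => Nat.zero_le _)
        (Finset.mem_univ i)
    omega
  have hd1 : 1 ≤ d := by omega
  set a : ℕ := d * (N + 1) + 1 with ha
  have ha2 : 2 ≤ a := by nlinarith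
  set D : ℕ := a ^ (N + 1) with hD
  have hD1 : 1 ≤ D := Nat.one_le_pow _ _ (by omega)
  set M : ℕ := d * D * (N + 1) with hM
  -- the space of monomials of degree bounded by M
  set T : Finset (MvPolynomial σ K) :=
    Finset.image (fun f : σ → Fin (M + 1) =>
      monomial (Finsupp.equivFunOnFinite.symm fun i => (f i : ℕ)) (1 : K)) Finset.univ with hT
  set W : Submodule K (MvPolynomial σ K) := Submodule.span K (T : Set (MvPolynomial σ K)) with hW
  have hmemW : ∀ p : MvPolynomial σ K, p.totalDegree ≤ M → p ∈ W := by
    intro p hp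
    rw [← support_sum_monomial_coeff p]
    apply Submodule.sum_mem
    intro u hu
    have hmono : monomial u (coeff u p) = (coeff u p) • monomial u (1 : K) := by
      rw [smul_monomial, smul_eq_mul, mul_one]
    rw [hmono]
    apply Submodule.smul_mem
    apply Submodule.subset_span
    have hub : ∀ i, u i ≤ M := by
      intro i
      have h1 : u i ≤ u.sum fun _ e => e := by
        by_cases hi : i ∈ u.support
        · exact Finset.single_le_sum (f := fun j => u j) (fun _ _ => Nat.zero_le _) hi
        · simp [Finsupp.notMem_support_iff.mp hi]
      exact h1.trans ((le_totalDegree hu).trans hp)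
    refine Finset.mem_coe.mpr (Finset.mem_image.mpr ⟨fun i => ⟨u i, Nat.lt_succ_of_le (hub i)⟩,
      Finset.mem_univ _, ?_⟩)
    have he : (Finsupp.equivFunOnFinite.symm fun i =>
        (((fun i => (⟨u i, Nat.lt_succ_of_le (hub i)⟩ : Fin (M+1))) i : Fin (M+1)) : ℕ)) = u := by
      ext i
      simp
    rw [he]
  have hprodW : ∀ v : Fin (N + 1) → Fin (D + 1), (∏ i, x i ^ (v i : ℕ)) ∈ W := by
    intro v
    apply hmemW
    calc (∏ i, x i ^ (v i : ℕ)).totalDegree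
        ≤ ∑ i, (x i ^ (v i : ℕ)).totalDegree := totalDegree_finset_prod _ _
      _ ≤ ∑ _i : Fin (N + 1), D * d := by
          apply Finset.sum_le_sum
          intro i _
          calc (x i ^ (v i : ℕ)).totalDegree ≤ (v i : ℕ) * (x i).totalDegree :=
                totalDegree_pow _ _
            _ ≤ D * d := Nat.mul_le_mul (Nat.le_of_lt_succ (v i).isLt) (hdle i)
      _ = M := by rw [hM]; ring_nf; rw [Finset.sum_const, Finset.card_univ, Fintype.card_fin]; ring
  have hWfin : Module.Finite K W := Module.Finite.span_of_finite K T.finite_toSet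
  have hfr : Module.finrank K W ≤ (M + 1) ^ N := by
    have h1 : Module.finrank K W ≤ T.card := finrank_span_finset_le_card T
    have h2 : T.card ≤ Fintype.card (σ → Fin (M + 1)) := by
      calc T.card ≤ Finset.univ.card := Finset.card_image_le
        _ = Fintype.card (σ → Fin (M + 1)) := Finset.card_univ
    have h3 : Fintype.card (σ → Fin (M + 1)) = (M + 1) ^ N := by
      rw [Fintype.card_fun, Fintype.card_fin, hN]
    omega
  have hnum : (M + 1) ^ N < (D + 1) ^ (N + 1) := by
    have hMa : M + 1 ≤ a * D := by
      have : d * (N + 1) * D + 1 ≤ (d * (N + 1)) * D + D := by omega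
      calc M + 1 = d * (N + 1) * D + 1 := by rw [hM]; ring
        _ ≤ (d * (N + 1)) * D + D := this
        _ = a * D := by rw [ha]; ring
    calc (M + 1) ^ N ≤ (a * D) ^ N := Nat.pow_le_pow_left hMa N
      _ = a ^ N * D ^ N := mul_pow a D N
      _ < D * D ^ N := by
          have haN : a ^ N < D := by
            rw [hD]
            exact Nat.pow_lt_pow_right (by omega) (Nat.lt_succ_self N)
          exact Nat.mul_lt_mul_of_lt_of_le haN (le_refl _) (Nat.pow_pos (by omega))
      _ = D ^ (N + 1) := by ring
      _ ≤ (D + 1) ^ (N + 1) := Nat.pow_le_pow_left (by omega) _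
  have hnli : ¬ LinearIndependent K (fun v : Fin (N + 1) → Fin (D + 1) =>
      (⟨∏ i, x i ^ (v i : ℕ), hprodW v⟩ : W)) := by
    intro hli
    have hcard := hli.fintype_card_le_finrank
    rw [Fintype.card_fun, Fintype.card_fin, Fintype.card_fin] at hcard
    omega
  obtain ⟨g, hsum, v0, hv0⟩ := Fintype.not_linearIndependent_iff.mp hnli
  have hsum' : ∑ v : Fin (N + 1) → Fin (D + 1), g v • (∏ i, x i ^ (v i : ℕ)) = 0 := by
    have := congrArg (Submodule.subtype W) hsum
    simpa using this
  set Q : MvPolynomial (Fin (N + 1)) K :=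
    ∑ v : Fin (N + 1) → Fin (D + 1),
      monomial (Finsupp.equivFunOnFinite.symm fun i => (v i : ℕ)) (g v) with hQ
  refine ⟨Q, ?_, ?_⟩
  · intro h0
    apply hv0
    have hc := congrArg (coeff (Finsupp.equivFunOnFinite.symm fun i => ((v0 i : ℕ)))) h0
    rw [hQ] at hc
    rw [coeff_zero] at hc
    rw [MvPolynomial.coeff_sum] at hc
    rw [Finset.sum_eq_single v0] at hc
    · rwa [coeff_monomial, if_pos rfl] at hc
    · intro v _ hvne
      rw [coeff_monomial, if_neg]
      intro heq
      apply hvne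
      funext i
      have := congrArg (fun u : Fin (N+1) →₀ ℕ => u i) heq
      simp only [Finsupp.equivFunOnFinite_symm_apply_apply] at this
      exact Fin.ext this
    · intro hmem
      exact absurd (Finset.mem_univ v0) hmem
  · rw [hQ, map_sum]
    rw [← hsum']
    apply Finset.sum_congr rfl
    intro v _
    rw [aeval_monomial, Finsupp.prod_fintype _ _ (fun i => pow_zero _), Algebra.smul_def]
    simp



/-- The dimension bound: any chain of primes in a polynomial ring over a field has length at
most the number of variables. -/
lemma ltSeries_length_le {σ : Type*} [Fintype σ]
    (P : LTSeries (PrimeSpectrum (MvPolynomial σ K))) : P.length ≤ Fintype.card σ := by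
  set N := Fintype.card σ with hNdef
  by_contra hlen
  push_neg at hlen
  have hle : N + 2 ≤ P.length + 1 := by omega
  set pp : Fin (N + 2) → Ideal (MvPolynomial σ K) :=
    fun i => (P.toFun (Fin.castLE hle i)).asIdeal with hpp
  have hprime : ∀ i, (pp i).IsPrime := fun i => (P.toFun _).isPrime
  have hmono : Monotone pp := by
    intro i j hij
    exact (PrimeSpectrum.asIdeal_le_asIdeal _ _).mpr (P.strictMono.monotone (by simpa))
  have hstr : ∀ i : Fin (N + 1), pp i.castSucc < pp i.succ := by
    intro i
    rw [PrimeSpectrum.asIdeal_lt_asIdeal]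
    exact P.strictMono (by simp [Fin.lt_def])
  choose x hx1 hx2 using fun i : Fin (N + 1) => SetLike.exists_of_lt (hstr i)
  obtain ⟨Q, hQ0, hQeval⟩ := exists_algebraic_relation (K := K) hNdef.symm x
  exact hQ0 (cl_algebraicIndependent (N + 1) pp hprime hmono x hx1 hx2 Q
    (by rw [hQeval]; exact (pp 0).zero_mem))





lemma ht_of_isPrime {R : Type} [CommRing R] {J : Ideal R} (hJ : J.IsPrime) :
    ht J = Order.height (⟨J, hJ⟩ : PrimeSpectrum R) := by
  apply le_antisymm
  · exact iInf₂_le (⟨J, hJ⟩ : PrimeSpectrum R) (le_refl J)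
  · apply le_iInf₂
    intro p hp
    exact Order.height_mono ((PrimeSpectrum.asIdeal_le_asIdeal _ _).mp hp)

lemma X_not_mem_spanX {v : σ} {s : Set σ} (hv : v ∉ s) :
    (X v : MvPolynomial σ K) ∉ Ideal.span (X '' s : Set (MvPolynomial σ K)) := by
  intro hmem
  rw [mem_ideal_span_X_image] at hmem
  obtain ⟨i, his, hne⟩ := hmem (Finsupp.single v 1) (by
    rw [support_X]
    exact Finset.mem_singleton_self _)
  rw [Finsupp.single_apply] at hne
  by_cases h : v = i
  · exact hv (h ▸ his)
  · exact hne (if_neg h)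

/-- The canonical point of the spectrum attached to a set of variables. -/
noncomputable def ptX (K : Type) [Field K] (s : Set σ) : PrimeSpectrum (MvPolynomial σ K) :=
  ⟨Ideal.span (X '' s), spanX_isPrime s⟩

lemma ptX_lt_ptX {s t : Set σ} (hst : s ⊆ t) {v : σ} (hvt : v ∈ t) (hvs : v ∉ s) :
    ptX K s < ptX K (σ := σ) t := by
  rw [← PrimeSpectrum.asIdeal_lt_asIdeal]
  refine lt_of_le_of_ne (Ideal.span_mono (Set.image_mono hst)) ?_
  intro heq
  apply X_not_mem_spanX (K := K) hvs
  have hmem : (X v : MvPolynomial σ K) ∈ Ideal.span (X '' t) := Ideal.subset_span ⟨v, hvt, rfl⟩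
  show (X v : MvPolynomial σ K) ∈ Ideal.span (X '' s)
  rw [show Ideal.span (X '' s : Set (MvPolynomial σ K)) = (ptX K s).asIdeal from rfl, heq]
  exact hmem

lemma exists_ltSeries_ptX (s : Finset σ) :
    ∃ P : LTSeries (PrimeSpectrum (MvPolynomial σ K)),
      P.last = ptX K ↑s ∧ P.length = s.card := by
  classical
  induction s using Finset.induction_on with
  | empty => exact ⟨RelSeries.singleton _ (ptX K (↑(∅ : Finset σ))), rfl, rfl⟩
  | @insert v s hvs ih =>
      obtain ⟨P, hPlast, hPlen⟩ := ih
      have hlt : P.last < ptX K (↑(insert v s) : Set σ) := by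
        rw [hPlast]
        exact ptX_lt_ptX (v := v) (by intro u hu; simp [hu]) (by simp) (by simpa using hvs)
      refine ⟨P.snoc _ hlt, RelSeries.last_snoc _ _ _, ?_⟩
      show P.length + 1 = _
      rw [hPlen, Finset.card_insert_of_notMem hvs]

lemma card_le_height_ptX (s : Finset σ) :
    (s.card : ℕ∞) ≤ Order.height (ptX K (σ := σ) ↑s) := by
  obtain ⟨P, hPlast, hPlen⟩ := exists_ltSeries_ptX (K := K) s
  have := Order.length_le_height_last (p := P)
  rwa [hPlast, hPlen] at this

lemma height_ptX_le [Fintype σ] (s : Finset σ) :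
    Order.height (ptX K (σ := σ) ↑s) ≤ s.card := by
  classical
  apply Order.height_le
  intro P hPlast
  suffices h : ∀ (k : ℕ) (s : Finset σ), (Finset.univ \ s).card = k →
      ∀ P : LTSeries (PrimeSpectrum (MvPolynomial σ K)), P.last ≤ ptX K ↑s →
      P.length ≤ s.card by
    exact_mod_cast h _ s rfl P (le_of_eq hPlast)
  intro k
  induction k with
  | zero =>
      intro s hs P hle
      have huniv : s = Finset.univ := by
        have := Finset.card_eq_zero.mp hs
        have : Finset.univ ⊆ s := fun u hu => by
          by_contra hus
          have : u ∈ Finset.univ \ s := Finset.mem_sdiff.mpr ⟨hu, hus⟩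
          simp_all
        exact Finset.eq_univ_of_forall fun u => this (Finset.mem_univ u)
      rw [huniv, Finset.card_univ]
      exact ltSeries_length_le P
  | succ k ih =>
      intro s hs P hle
      have hne : (Finset.univ \ s).Nonempty := by
        rw [← Finset.card_pos, hs]; omega
      obtain ⟨v, hv⟩ := hne
      rw [Finset.mem_sdiff] at hv
      have hlt : P.last < ptX K (↑(insert v s) : Set σ) :=
        lt_of_le_of_lt hle (ptX_lt_ptX (v := v) (by intro u hu; simp [hu]) (by simp) (by simpa using hv.2))
      have hcard : (Finset.univ \ insert v s).card = k := by
        rw [Finset.sdiff_insert]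
        rw [Finset.card_erase_of_mem (Finset.mem_sdiff.mpr hv)]
        omega
      have := ih (insert v s) hcard (P.snoc _ hlt)
        (le_of_eq (RelSeries.last_snoc _ _ _))
      rw [Finset.card_insert_of_notMem hv.2] at this
      have hlen : (P.snoc _ hlt).length = P.length + 1 := rfl
      omega

end Aux

/-- if `p' = (x_{i₁,e₁},…,x_{i_r,e_r})` is a prime generated by
polarization variables containing `𝒫(I)`, then `p = (x_{i₁},…,x_{i_r})` is a prime
containing `I`; moreover if `p'` has minimal height among primes containing `𝒫(I)`
then `p` has minimal height among primes containing `I`. -/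


theorem polar_prime_down (k : Type) [Field k] (m n q : ℕ) (A : Fin q → Fin n → ℕ)
    (hA : ∀ t i, A t i ≤ m + 1) (s : Finset (Fin n)) (e : Fin n → Fin (m + 1))
    (hle : polarIdeal k m A ≤
      Ideal.span ((fun i => (X (i, e i) : MvPolynomial (Fin n × Fin (m + 1)) k)) '' s)) :
    (Ideal.span ((fun i => (X i : MvPolynomial (Fin n) k)) '' s)).IsPrime ∧
    monIdeal k A ≤ Ideal.span ((fun i => (X i : MvPolynomial (Fin n) k)) '' s) ∧
    ((∀ Q : Ideal (MvPolynomial (Fin n × Fin (m + 1)) k), Q.IsPrime →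
        polarIdeal k m A ≤ Q →
        ht (Ideal.span ((fun i =>
          (X (i, e i) : MvPolynomial (Fin n × Fin (m + 1)) k)) '' s)) ≤ ht Q) →
      ∀ Q : Ideal (MvPolynomial (Fin n) k), Q.IsPrime → monIdeal k A ≤ Q →
        ht (Ideal.span ((fun i => (X i : MvPolynomial (Fin n) k)) '' s)) ≤ ht Q) := by
  classical
  -- the three ideals as variable-spans
  have hsmall_eq : (fun i => (X i : MvPolynomial (Fin n) k)) '' ↑s = X '' ↑s := rfl
  have hbig_eq : (fun i => (X (i, e i) : MvPolynomial (Fin n × Fin (m + 1)) k)) '' ↑s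
      = X '' ↑(s.image fun i => (i, e i)) := by
    rw [Finset.coe_image, Set.image_image]
  -- Part 1 : primality
  have hprime : (Ideal.span ((fun i => (X i : MvPolynomial (Fin n) k)) '' ↑s)).IsPrime := by
    rw [hsmall_eq]
    exact spanX_isPrime _
  -- Part 2 : containment
  have hcont : monIdeal k A ≤ Ideal.span ((fun i => (X i : MvPolynomial (Fin n) k)) '' ↑s) := by
    rw [monIdeal, Ideal.span_le]
    rintro _ ⟨t, rfl⟩
    have hpol : polar k m (A t) ∈ Ideal.span
        ((fun i => (X (i, e i) : MvPolynomial (Fin n × Fin (m + 1)) k)) '' ↑s) :=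
      hle (Ideal.subset_span ⟨t, rfl⟩)
    obtain ⟨i, his, hlt⟩ := mem_spanX_polar m (A t) s e hpol
    exact mon_mem_spanX (A t) s his (by omega)
  refine ⟨hprime, hcont, ?_⟩
  -- Part 3 : minimality of height
  intro H Q hQp hQI
  set s'' : Finset (Fin n) := Finset.univ.filter fun i => (X i : MvPolynomial (Fin n) k) ∈ Q
    with hs''
  have key : ∀ t, ∃ i, ((X i : MvPolynomial (Fin n) k) ∈ Q) ∧ A t i ≠ 0 := by
    intro t
    have hmonQ : mon k (A t) ∈ Q := hQI (Ideal.subset_span ⟨t, rfl⟩)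
    rw [mon, Ideal.IsPrime.prod_mem_iff] at hmonQ
    obtain ⟨i, _, hpow⟩ := hmonQ
    have hAt : A t i ≠ 0 := by
      intro h0
      rw [h0, pow_zero] at hpow
      exact hQp.ne_top (Ideal.eq_top_iff_one Q |>.mpr hpow)
    exact ⟨i, hQp.mem_of_pow_mem _ hpow, hAt⟩
  -- the zero-polarization prime over s''
  have hzero_eq : (fun i => (X (i, (0 : Fin (m + 1))) :
      MvPolynomial (Fin n × Fin (m + 1)) k)) '' ↑s''
      = X '' ↑(s''.image fun i => (i, (0 : Fin (m + 1)))) := by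
    rw [Finset.coe_image, Set.image_image]
  have hpolar'' : polarIdeal k m A ≤ Ideal.span
      ((fun i => (X (i, (0 : Fin (m + 1))) : MvPolynomial (Fin n × Fin (m + 1)) k)) '' ↑s'') := by
    rw [polarIdeal, Ideal.span_le]
    rintro _ ⟨t, rfl⟩
    obtain ⟨i, hiQ, hAt⟩ := key t
    exact polar_mem_spanX m (A t) s'' (fun _ => (0 : Fin (m + 1)))
      (Finset.mem_filter.mpr ⟨Finset.mem_univ _, hiQ⟩) (by simpa using Nat.pos_of_ne_zero hAt)
  have hprime'' : (Ideal.span ((fun i => (X (i, (0 : Fin (m + 1))) :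
      MvPolynomial (Fin n × Fin (m + 1)) k)) '' ↑s'')).IsPrime := by
    rw [hzero_eq]; exact spanX_isPrime _
  have hH := H _ hprime'' hpolar''
  -- now convert all the `ht`s into `Order.height`s of `ptX` points
  have e1 : ht (Ideal.span ((fun i => (X (i, e i) :
      MvPolynomial (Fin n × Fin (m + 1)) k)) '' ↑s))
      = Order.height (ptX k (↑(s.image fun i => (i, e i)) :
        Set (Fin n × Fin (m + 1)))) := by
    rw [hbig_eq]
    exact ht_of_isPrime (spanX_isPrime _)
  have e2 : ht (Ideal.span ((fun i => (X (i, (0 : Fin (m + 1))) :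
      MvPolynomial (Fin n × Fin (m + 1)) k)) '' ↑s''))
      = Order.height (ptX k (↑(s''.image fun i => (i, (0 : Fin (m + 1)))) :
        Set (Fin n × Fin (m + 1)))) := by
    rw [hzero_eq]
    exact ht_of_isPrime (spanX_isPrime _)
  have e3 : ht (Ideal.span ((fun i => (X i : MvPolynomial (Fin n) k)) '' ↑s))
      = Order.height (ptX k (↑s : Set (Fin n))) := ht_of_isPrime (spanX_isPrime _)
  have e4 : ht Q = Order.height (⟨Q, hQp⟩ : PrimeSpectrum (MvPolynomial (Fin n) k)) :=
    ht_of_isPrime hQp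
  -- cardinalities
  have hcard1 : (s.image fun i => (i, e i)).card = s.card :=
    Finset.card_image_of_injective _ fun a b hab => congrArg Prod.fst hab
  have hcard2 : (s''.image fun i => (i, (0 : Fin (m + 1)))).card = s''.card :=
    Finset.card_image_of_injective _ fun a b hab => congrArg Prod.fst hab
  -- chain of inequalities
  rw [e3, e4]
  calc Order.height (ptX k (↑s : Set (Fin n)))
      ≤ (s.card : ℕ∞) := height_ptX_le s
    _ ≤ Order.height (ptX k (↑(s.image fun i => (i, e i)) : Set (Fin n × Fin (m + 1)))) := by
        rw [← hcard1]
        exact card_le_height_ptX _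
    _ ≤ Order.height (ptX k (↑(s''.image fun i => (i, (0 : Fin (m + 1)))) :
        Set (Fin n × Fin (m + 1)))) := by
        rw [← e1, ← e2]
        exact hH
    _ ≤ ((s''.image fun i => (i, (0 : Fin (m + 1)))).card : ℕ∞) := height_ptX_le _
    _ = (s''.card : ℕ∞) := by rw [hcard2]
    _ ≤ Order.height (ptX k (↑s'' : Set (Fin n))) := card_le_height_ptX _
    _ ≤ Order.height (⟨Q, hQp⟩ : PrimeSpectrum (MvPolynomial (Fin n) k)) := by
        apply Order.height_mono
        show (ptX k (↑s'' : Set (Fin n))).asIdeal ≤ Q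
        rw [show (ptX k (↑s'' : Set (Fin n))).asIdeal = Ideal.span (X '' ↑s'') from rfl,
          Ideal.span_le]
        rintro _ ⟨i, hi, rfl⟩
        exact (Finset.mem_filter.mp hi).2
end

section
/- For any monomial ideal I in a polynomial ring over a field, the height of I equals the height of its polarization P(I). -/
open MvPolynomial

set_option linter.unusedSectionVars false

namespace PolarProof

variable {k : Type} [Field k]

/-! ### A growth bound: algebraically independent families in polynomial rings -/

section Counting

variable {σ : Type} [Fintype σ] [DecidableEq σ] [DecidableEq (σ →₀ ℕ)]
  [DecidableEq (MvPolynomial σ k)]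

lemma totalDegree_aeval_le {M : ℕ} (x : Fin M → MvPolynomial σ k) (d : ℕ)
    (hd : ∀ i, (x i).totalDegree ≤ d) (P : MvPolynomial (Fin M) k) :
    (aeval x P).totalDegree ≤ d * P.totalDegree := by
  rw [aeval_def, eval₂_eq]
  refine (totalDegree_finset_sum _ _).trans ?_
  apply Finset.sup_le
  intro m hm
  refine (totalDegree_mul _ _).trans ?_
  have h1 : (algebraMap k (MvPolynomial σ k) (coeff m P)).totalDegree = 0 := totalDegree_C _
  rw [h1, zero_add]
  refine (totalDegree_finset_prod _ _).trans ?_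
  have h2 : ∀ i ∈ m.support, ((x i) ^ m i).totalDegree ≤ m i * d := by
    intro i _
    exact (totalDegree_pow _ _).trans (Nat.mul_le_mul_left _ (hd i))
  refine (Finset.sum_le_sum h2).trans ?_
  rw [← Finset.sum_mul]
  have h3 : (∑ i ∈ m.support, m i) ≤ P.totalDegree := le_totalDegree hm
  calc (∑ i ∈ m.support, m i) * d ≤ P.totalDegree * d := Nat.mul_le_mul_right _ h3
    _ = d * P.totalDegree := Nat.mul_comm _ _

/-- Polynomials of total degree at most `E` lie in the span of the monomials whose
exponent vector is componentwise at most `E`. -/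
lemma mem_span_box {E : ℕ} (p : MvPolynomial σ k) (hp : p.totalDegree ≤ E) :
    p ∈ Submodule.span k
      (((Finset.univ.image fun f : σ → Fin (E+1) =>
          Finsupp.equivFunOnFinite.symm fun i => ((f i : ℕ))).image
        fun e => (monomial e (1:k) : MvPolynomial σ k)) : Set (MvPolynomial σ k)) := by
  rw [← p.support_sum_monomial_coeff]
  apply Submodule.sum_mem
  intro m hm
  have hms : monomial m (coeff m p) = coeff m p • monomial m (1:k) := by
    rw [smul_monomial, smul_eq_mul, mul_one]
  rw [hms]
  apply Submodule.smul_mem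
  apply Submodule.subset_span
  have hmE : ∀ i, m i ≤ E := by
    intro i
    have h1 : m i ≤ m.sum fun _ e => e := by
      by_cases h0 : m i = 0
      · rw [h0]; exact Nat.zero_le _
      · exact Finset.single_le_sum (f := fun j => m j) (fun _ _ => Nat.zero_le _)
          (Finsupp.mem_support_iff.mpr h0)
    exact h1.trans ((le_totalDegree hm).trans hp)
  refine Finset.mem_coe.mpr ?_
  simp only [Finset.mem_image, Finset.mem_univ, true_and]
  refine ⟨m, ⟨fun i => ⟨m i, Nat.lt_succ_of_le (hmE i)⟩, ?_⟩, rfl⟩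
  ext i
  rfl

lemma card_le_of_algIndep {M : ℕ} {x : Fin M → MvPolynomial σ k}
    (hx : AlgebraicIndependent k x) : M ≤ Fintype.card σ := by
  by_contra hcon
  push_neg at hcon
  set N := Fintype.card σ with hN
  set d := 1 + Finset.univ.sup fun i => (x i).totalDegree with hdd
  have hd : ∀ i, (x i).totalDegree ≤ d := by
    intro i
    have h := Finset.le_sup (f := fun i => (x i).totalDegree) (Finset.mem_univ i)
    refine le_trans ?_ (Nat.le_add_left _ 1)
    simpa using h
  have hd1 : 1 ≤ d := Nat.le_add_right _ _
  set T := (d*M+1)^N with hT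
  set E := d * (M * T) with hE
  set box : Finset (σ →₀ ℕ) := Finset.univ.image fun f : σ → Fin (E+1) =>
    Finsupp.equivFunOnFinite.symm fun i => ((f i : ℕ)) with hbox
  set Bset : Finset (MvPolynomial σ k) := box.image fun e => (monomial e (1:k)) with hB
  set mg : (Fin M → Fin (T+1)) → (Fin M →₀ ℕ) :=
    fun g => Finsupp.equivFunOnFinite.symm fun i => ((g i : ℕ)) with hmgdef
  have hmg : Function.Injective mg := by
    intro g g' h
    funext i
    have := congrArg (fun m : Fin M →₀ ℕ => m i) h
    simpa [hmgdef, Finsupp.coe_equivFunOnFinite_symm, Fin.val_injective.eq_iff] using this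
  set v : (Fin M → Fin (T+1)) → MvPolynomial σ k :=
    fun g => aeval x (monomial (mg g) (1:k)) with hv
  have hvind : LinearIndependent k v := by
    have b := (MvPolynomial.basisMonomials (Fin M) k).linearIndependent
    rw [coe_basisMonomials] at b
    have h1 : LinearIndependent k fun g : Fin M → Fin (T+1) => monomial (mg g) (1:k) :=
      b.comp mg hmg
    have h2 := h1.map' (aeval x).toLinearMap
      (LinearMap.ker_eq_bot.mpr (algebraicIndependent_iff_injective_aeval.mp hx))
    rw [hv]
    simp only [Function.comp_def, AlgHom.toLinearMap_apply] at h2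
    exact h2
  have hspan : ∀ g, v g ∈ Submodule.span k (Bset : Set (MvPolynomial σ k)) := by
    intro g
    apply mem_span_box
    have h1 := totalDegree_aeval_le x d hd (monomial (mg g) (1:k))
    have h2 : (monomial (mg g) (1:k)).totalDegree ≤ M * T := by
      rw [totalDegree_monomial _ (one_ne_zero)]
      have : ∀ i ∈ (mg g).support, mg g i ≤ T := by
        intro i _
        simpa [hmgdef, Finsupp.coe_equivFunOnFinite_symm] using Fin.is_le (g i)
      calc ((mg g).sum fun _ e => e) ≤ ∑ _i ∈ (mg g).support, T := Finset.sum_le_sum this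
        _ = (mg g).support.card * T := by rw [Finset.sum_const, smul_eq_mul]
        _ ≤ M * T := Nat.mul_le_mul_right _ (le_trans (Finset.card_le_univ _) (by simp))
    rw [hE, hv]
    show ((aeval x) ((monomial (mg g)) (1:k))).totalDegree ≤ d * (M * T)
    exact h1.trans (Nat.mul_le_mul_left _ h2)
  -- cardinality comparison
  have hWval : LinearIndependent k fun g =>
      (⟨v g, hspan g⟩ : Submodule.span k (Bset : Set (MvPolynomial σ k))) := by
    apply LinearIndependent.of_comp (Submodule.span k (Bset : Set (MvPolynomial σ k))).subtype
    exact hvind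
  have hcard := hWval.cardinal_le_rank
  have hrank := rank_span_finset_le (R := k) Bset
  have hc2 : (Cardinal.mk (Fin M → Fin (T+1))) ≤ (Bset.card : Cardinal) :=
    hcard.trans hrank
  have hc3 : ((T+1)^M : ℕ) ≤ Bset.card := by
    have : Cardinal.mk (Fin M → Fin (T+1)) = (((T+1)^M : ℕ) : Cardinal) := by
      rw [Cardinal.mk_fintype]
      simp
    rw [this] at hc2
    exact_mod_cast hc2
  have hc4 : Bset.card ≤ (E+1)^N := by
    calc Bset.card ≤ box.card := Finset.card_image_le
      _ ≤ (Finset.univ : Finset (σ → Fin (E+1))).card := Finset.card_image_le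
      _ = (E+1)^N := by simp [hN]
  have hfinal : ((T+1):ℕ)^M ≤ (E+1)^N := hc3.trans hc4
  -- arithmetic contradiction
  have hT1 : 1 ≤ T := Nat.one_le_pow _ _ (Nat.succ_le_succ (Nat.zero_le _))
  have h5 : E + 1 ≤ (d*M+1) * T := by
    have : (d*M+1) * T = d*M*T + T := by ring
    rw [this, hE]
    have : d * (M * T) = d * M * T := by ring
    omega
  have h6 : (E+1)^N ≤ ((d*M+1) * T)^N := Nat.pow_le_pow_left h5 N
  have h7 : ((d*M+1) * T)^N = T * T^N := by
    rw [mul_pow, ← hT]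
  have h8 : T * T^N < (T+1)^(N+1) := by
    have : T * T^N = T^(N+1) := by ring
    rw [this]
    exact Nat.pow_lt_pow_left (Nat.lt_succ_self T) (Nat.succ_ne_zero N)
  have h9 : (T+1)^(N+1) ≤ (T+1)^M := Nat.pow_le_pow_right (Nat.le_add_left _ _) hcon
  omega

end Counting

/-! ### Variable primes -/

section VarPrime

variable {σ : Type} [Fintype σ] [DecidableEq σ]

/-- The algebra map killing the variables in `S`. -/
noncomputable def kil (S : Finset σ) :
    MvPolynomial σ k →ₐ[k] MvPolynomial {i : σ // i ∉ S} k :=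
  aeval (fun i => if h : i ∈ S then 0 else X ⟨i, h⟩)

/-- The "variable prime" ideal generated by the variables in `S`. -/
noncomputable def vp (S : Finset σ) : Ideal (MvPolynomial σ k) :=
  Ideal.span (X '' (S : Set σ))

lemma X_mem_vp_of_mem {S : Finset σ} {i : σ} (hi : i ∈ S) : (X i : MvPolynomial σ k) ∈ vp S :=
  Ideal.subset_span ⟨i, hi, rfl⟩

lemma sub_rename_kil_mem (S : Finset σ) (f : MvPolynomial σ k) :
    f - rename Subtype.val (kil S f) ∈ vp (k := k) S := by
  induction f using MvPolynomial.induction_on with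
  | C a => simp [kil, vp]
  | add p q hp hq =>
      have : p + q - rename Subtype.val (kil S (p + q)) =
          (p - rename Subtype.val (kil S p)) + (q - rename Subtype.val (kil S q)) := by
        rw [map_add, map_add]; ring
      rw [this]
      exact Ideal.add_mem _ hp hq
  | mul_X p i hp =>
      by_cases hi : i ∈ S
      · have : kil (k := k) S (p * X i) = 0 := by
          rw [map_mul]
          have : kil (k := k) S (X i) = 0 := by simp [kil, hi]
          rw [this, mul_zero]
        rw [this, map_zero, sub_zero]
        exact Ideal.mul_mem_left _ p (X_mem_vp_of_mem hi)
      · have h1 : kil (k := k) S (p * X i) = kil S p * X ⟨i, hi⟩ := by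
          rw [map_mul]
          congr 1
          simp [kil, hi]
        have h2 : p * X i - rename Subtype.val (kil S (p * X i)) =
            (p - rename Subtype.val (kil S p)) * X i := by
          rw [h1, map_mul, rename_X]
          ring
        rw [h2]
        exact Ideal.mul_mem_right _ _ hp

lemma vp_eq_ker (S : Finset σ) :
    vp (k := k) S = RingHom.ker (kil (k := k) S) := by
  apply le_antisymm
  · rw [vp, Ideal.span_le]
    rintro _ ⟨i, hi, rfl⟩
    simp only [SetLike.mem_coe, RingHom.mem_ker]
    simp [kil, Finset.mem_coe.mp hi]
  · intro f hf
    rw [RingHom.mem_ker] at hf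
    have := sub_rename_kil_mem (k := k) S f
    rw [hf, map_zero, sub_zero] at this
    exact this

lemma vp_isPrime (S : Finset σ) : (vp (k := k) S).IsPrime := by
  rw [vp_eq_ker]
  exact RingHom.ker_isPrime _

lemma X_mem_vp_iff {S : Finset σ} {i : σ} : (X i : MvPolynomial σ k) ∈ vp S ↔ i ∈ S := by
  constructor
  · intro h
    by_contra hi
    rw [vp_eq_ker, RingHom.mem_ker] at h
    have : kil (k := k) S (X i) = X ⟨i, hi⟩ := by simp [kil, hi]
    rw [this] at h
    exact X_ne_zero _ h
  · exact X_mem_vp_of_mem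

lemma vp_mono {S T : Finset σ} (h : S ⊆ T) : vp (k := k) S ≤ vp T :=
  Ideal.span_mono (Set.image_mono (by exact_mod_cast h))

/-- Membership of a product of powers of variables in a prime ideal. -/
lemma prod_pow_mem_prime_iff {P : Ideal (MvPolynomial σ k)} [hP : P.IsPrime] (a : σ → ℕ) :
    (∏ i, X i ^ a i : MvPolynomial σ k) ∈ P ↔ ∃ i, (X i : MvPolynomial σ k) ∈ P ∧ a i ≠ 0 := by
  rw [Ideal.IsPrime.prod_mem_iff]
  constructor
  · rintro ⟨i, -, hi⟩
    rcases Nat.eq_zero_or_pos (a i) with h0 | h0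
    · rw [h0, pow_zero] at hi
      exact absurd (P.eq_top_of_isUnit_mem hi isUnit_one) hP.ne_top
    · exact ⟨i, (hP.pow_mem_iff_mem _ h0).mp hi, Nat.pos_iff_ne_zero.mp h0⟩
  · rintro ⟨i, hXi, hai⟩
    exact ⟨i, Finset.mem_univ i, Ideal.pow_mem_of_mem P hXi _ (Nat.pos_of_ne_zero hai)⟩

/-- The point of the prime spectrum given by a variable prime. -/
noncomputable def vpt (S : Finset σ) : PrimeSpectrum (MvPolynomial σ k) :=
  ⟨vp S, vp_isPrime S⟩

lemma height_ge (S : Finset σ) :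
    ∀ P : PrimeSpectrum (MvPolynomial σ k), vp (k := k) S ≤ P.asIdeal →
      (S.card : ℕ∞) ≤ Order.height P := by
  induction S using Finset.strongInduction with
  | _ S ih =>
    intro P hP
    rcases Finset.eq_empty_or_nonempty S with rfl | ⟨i, hi⟩
    · simp
    · have herase : (vp (k := k) (S.erase i)) ≤ P.asIdeal :=
        le_trans (vp_mono (Finset.erase_subset _ _)) hP
      set Q : PrimeSpectrum (MvPolynomial σ k) := vpt (S.erase i) with hQ
      have hQP : Q < P := by
        rw [← PrimeSpectrum.asIdeal_lt_asIdeal]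
        apply lt_of_le_of_ne herase
        intro hEq
        have h1 : (X i : MvPolynomial σ k) ∈ P.asIdeal := hP (X_mem_vp_iff.mpr hi)
        rw [← hEq] at h1
        have := X_mem_vp_iff.mp h1
        simp at this
      have hIH : ((S.erase i).card : ℕ∞) ≤ Order.height Q :=
        ih (S.erase i) (Finset.erase_ssubset hi) Q (le_refl _)
      have hstep : Order.height Q + 1 ≤ Order.height P := by
        rw [Order.height_eq_iSup_lt_height P]
        exact le_iSup₂ (f := fun (y : PrimeSpectrum (MvPolynomial σ k)) (_ : y < P) =>
          Order.height y + 1) Q hQP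
      have hcard : (S.card : ℕ∞) = ((S.erase i).card : ℕ∞) + 1 := by
        rw [Finset.card_erase_of_mem hi]
        have h1 : 1 ≤ S.card := Finset.card_pos.mpr ⟨i, hi⟩
        have h2 : S.card = (S.card - 1) + 1 := by omega
        conv_lhs => rw [h2]
        push_cast
        ring
      rw [hcard]
      calc ((S.erase i).card : ℕ∞) + 1 ≤ Order.height Q + 1 := by gcongr
        _ ≤ Order.height P := hstep

end VarPrime

/-! ### Transcendence drops along chains of primes -/

section Drop

/-- Evaluating a multivariate polynomial after separating the first variable. -/
lemma aeval_cons_eq {A : Type} [CommRing A] [Algebra k A] {c : ℕ} (a : A) (w : Fin c → A)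
    (P : MvPolynomial (Fin (c+1)) k) :
    aeval (Fin.cons a w) P =
      Polynomial.eval₂ ((aeval w : MvPolynomial (Fin c) k →ₐ[k] A) : MvPolynomial (Fin c) k →+* A)
        a (finSuccEquiv k c P) := by
  induction P using MvPolynomial.induction_on with
  | C r =>
      have h1 : finSuccEquiv k c (C r) = Polynomial.C (C r) := by
        simp [finSuccEquiv_apply]
      rw [h1, aeval_C, Polynomial.eval₂_C]
      simp
  | add p q hp hq => rw [map_add, map_add, Polynomial.eval₂_add, hp, hq]
  | mul_X p i hp =>
      rw [map_mul, map_mul, Polynomial.eval₂_mul, hp]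
      congr 1
      refine Fin.cases ?_ ?_ i
      · rw [finSuccEquiv_X_zero, Polynomial.eval₂_X, aeval_X, Fin.cons_zero]
      · intro j
        rw [finSuccEquiv_X_succ, Polynomial.eval₂_C, aeval_X, Fin.cons_succ]
        simp

/-- Key step: if the images of `w` under `ρ` are algebraically independent, `a ≠ 0`
in the domain `A`, and `ρ a = 0`, then `Fin.cons a w` is algebraically independent. -/
lemma indep_cons {A B : Type} [CommRing A] [IsDomain A] [Algebra k A]
    [CommRing B] [Nontrivial B] [Algebra k B] (ρ : A →ₐ[k] B) (a : A) (ha : a ≠ 0)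
    (hρa : ρ a = 0) {c : ℕ} {w : Fin c → A} (hw : AlgebraicIndependent k (ρ ∘ w)) :
    AlgebraicIndependent k (Fin.cons a w : Fin (c+1) → A) := by
  rw [algebraicIndependent_iff]
  intro P hP
  rw [aeval_cons_eq] at hP
  set φ : MvPolynomial (Fin c) k →+* A :=
    ((aeval w : MvPolynomial (Fin c) k →ₐ[k] A) : MvPolynomial (Fin c) k →+* A) with hφ
  -- constant coefficients of solutions vanish
  have hcoeff : ∀ G : Polynomial (MvPolynomial (Fin c) k),
      Polynomial.eval₂ φ a G = 0 → G.coeff 0 = 0 := by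
    intro G hG
    have hρa' : (ρ : A →+* B) a = 0 := hρa
    have h2 : (ρ : A →+* B) (Polynomial.eval₂ φ a G) = 0 := by rw [hG, map_zero]
    rw [Polynomial.hom_eval₂, hρa', Polynomial.eval₂_at_zero] at h2
    apply hw.eq_zero_of_aeval_eq_zero
    show aeval (fun i => ρ (w i)) (G.coeff 0) = 0
    rw [← MvPolynomial.comp_aeval_apply (f := w) ρ (G.coeff 0)]
    exact h2
  -- key claim by induction on natDegree
  have key : ∀ n : ℕ, ∀ Q : Polynomial (MvPolynomial (Fin c) k), Q.natDegree ≤ n →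
      Polynomial.eval₂ φ a Q = 0 → Q = 0 := by
    intro n
    induction n with
    | zero =>
        intro Q hdeg hQ
        rw [Polynomial.eq_C_of_natDegree_eq_zero (Nat.le_zero.mp hdeg), hcoeff Q hQ, map_zero]
    | succ n ih =>
        intro Q hdeg hQ
        have hc0 : Q.coeff 0 = 0 := hcoeff Q hQ
        have hfact : Q = Polynomial.X * Q.divX := by
          conv_lhs => rw [← Polynomial.X_mul_divX_add Q]
          rw [hc0, map_zero, add_zero]
        rw [hfact, Polynomial.eval₂_mul, Polynomial.eval₂_X] at hQ
        have h4 : Polynomial.eval₂ φ a Q.divX = 0 := by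
          rcases mul_eq_zero.mp hQ with h | h
          · exact absurd h ha
          · exact h
        have h5 : Q.divX = 0 :=
          ih Q.divX (by
            have := Polynomial.natDegree_divX_eq_natDegree_tsub_one (p := Q)
            omega) h4
        rw [hfact, h5, mul_zero]
  have hQ0 : finSuccEquiv k c P = 0 := key _ _ (le_refl _) hP
  have := congrArg (finSuccEquiv k c).symm hQ0
  rw [AlgEquiv.symm_apply_apply, map_zero] at this
  exact this

end Drop

section Step

variable {σ : Type} [Fintype σ] [DecidableEq σ]

lemma indep_step {p q : Ideal (MvPolynomial σ k)} (hp : p.IsPrime) (hq : q.IsPrime) (hpq : p < q)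
    {c : ℕ} {y : Fin c → MvPolynomial σ k}
    (hy : AlgebraicIndependent k ((Ideal.Quotient.mkₐ k q) ∘ y)) :
    ∃ y' : Fin (c+1) → MvPolynomial σ k,
      AlgebraicIndependent k ((Ideal.Quotient.mkₐ k p) ∘ y') := by
  obtain ⟨f, hfq, hfp⟩ := SetLike.exists_of_lt hpq
  haveI := hp
  haveI := hq
  refine ⟨Fin.cons f y, ?_⟩
  have hcons : (Ideal.Quotient.mkₐ k p) ∘ (Fin.cons f y) =
      Fin.cons (Ideal.Quotient.mkₐ k p f) ((Ideal.Quotient.mkₐ k p) ∘ y) :=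
    Fin.comp_cons _ _ _
  rw [hcons]
  set ρ : (MvPolynomial σ k ⧸ p) →ₐ[k] (MvPolynomial σ k ⧸ q) :=
    Ideal.Quotient.liftₐ p (Ideal.Quotient.mkₐ k q)
    (fun a ha => by
      rw [Ideal.Quotient.mkₐ_eq_mk]
      exact Ideal.Quotient.eq_zero_iff_mem.mpr (le_of_lt hpq ha)) with hρ
  haveI : Nontrivial (MvPolynomial σ k ⧸ q) := Ideal.Quotient.nontrivial_iff.mpr hq.ne_top
  apply indep_cons ρ
  · intro h0
    rw [Ideal.Quotient.mkₐ_eq_mk, Ideal.Quotient.eq_zero_iff_mem] at h0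
    exact hfp h0
  · rw [hρ]
    simp only [Ideal.Quotient.mkₐ_eq_mk, Ideal.Quotient.liftₐ_apply]
    change Ideal.Quotient.mk q f = 0
    exact Ideal.Quotient.eq_zero_iff_mem.mpr hfq
  · have : ρ ∘ ((Ideal.Quotient.mkₐ k p) ∘ y) = (Ideal.Quotient.mkₐ k q) ∘ y := by
      funext t
      simp [hρ]
      rfl
    rw [this]
    exact hy

lemma indep_base (S : Finset σ) :
    ∃ y : Fin (Fintype.card σ - S.card) → MvPolynomial σ k,
      AlgebraicIndependent k ((Ideal.Quotient.mkₐ k (vp S)) ∘ y) := by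
  have hcard : Fintype.card {i : σ // i ∉ S} = Fintype.card σ - S.card := by
    rw [Fintype.card_subtype_compl]
    congr 1
    exact Fintype.card_coe S
  set e : Fin (Fintype.card σ - S.card) ≃ {i : σ // i ∉ S} :=
    (Fintype.equivFinOfCardEq hcard).symm with he
  refine ⟨fun t => X ((e t) : σ), ?_⟩
  set ψ : (MvPolynomial σ k ⧸ vp (k := k) S) →ₐ[k] MvPolynomial {i : σ // i ∉ S} k :=
    Ideal.Quotient.liftₐ (vp S) (kil S)
      (fun a ha => by
        have := (vp_eq_ker (k := k) S) ▸ ha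
        exact this) with hψ
  apply AlgebraicIndependent.of_comp ψ
  have hx : AlgebraicIndependent k (X : {i : σ // i ∉ S} → MvPolynomial {i : σ // i ∉ S} k) :=
    MvPolynomial.algebraicIndependent_X _ _
  have hcomp : (ψ ∘ ((Ideal.Quotient.mkₐ k (vp S)) ∘ fun t => X ((e t) : σ))) =
      (X : {i : σ // i ∉ S} → MvPolynomial {i : σ // i ∉ S} k) ∘ e := by
    funext t
    simp only [Function.comp_apply, hψ, Ideal.Quotient.mkₐ_eq_mk, Ideal.Quotient.liftₐ_apply,
      Ideal.Quotient.lift_mk]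
    show kil (k := k) S (X ((e t) : σ)) = X (e t)
    rw [kil, aeval_X]
    rw [dif_neg (e t).2]
  rw [hcomp]
  exact hx.comp e (Equiv.injective e)

lemma height_le_card (S : Finset σ) :
    Order.height (vpt (k := k) S) ≤ (S.card : ℕ∞) := by
  classical
  apply Order.height_le
  intro π hlast
  have main : ∀ j : ℕ, (hj : j ≤ π.length) →
      ∃ y : Fin (Fintype.card σ - S.card + j) → MvPolynomial σ k,
        AlgebraicIndependent k
          ((Ideal.Quotient.mkₐ k (π ⟨π.length - j, by omega⟩).asIdeal) ∘ y) := by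
    intro j
    induction j with
    | zero =>
        intro _
        obtain ⟨y, hy⟩ := indep_base (k := k) S
        refine ⟨y, ?_⟩
        have h1 : (π ⟨π.length - 0, by omega⟩) = vpt (k := k) S := by
          have h2 : (⟨π.length - 0, by omega⟩ : Fin (π.length + 1)) = Fin.last π.length := by
            ext; simp
          rw [h2]
          exact hlast
        rw [h1]
        exact hy
    | succ j ih =>
        intro hj1
        obtain ⟨y, hy⟩ := ih (by omega)
        have hlt : π ⟨π.length - (j+1), by omega⟩ < π ⟨π.length - j, by omega⟩ := by
          apply π.strictMono
          rw [Fin.lt_def]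
          simp only []
          omega
        obtain ⟨y', hy'⟩ := indep_step (π _).2 (π _).2
          ((PrimeSpectrum.asIdeal_lt_asIdeal _ _).mpr hlt) hy
        exact ⟨y', hy'⟩
  obtain ⟨y, hy⟩ := main π.length (le_refl _)
  have hind : AlgebraicIndependent k y := AlgebraicIndependent.of_comp _ hy
  have hle := card_le_of_algIndep hind
  have hS : S.card ≤ Fintype.card σ := by
    have := Finset.card_le_univ S
    simpa using this
  exact_mod_cast (by omega : π.length ≤ S.card)

end Step

end PolarProof

open PolarProof

/-- `polar` as a product over all doubled variables. -/
lemma polar_eq_prod (k : Type) [Field k] (m : ℕ) {n : ℕ} (a : Fin n → ℕ) :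
    polar k m a =
      ∏ u : Fin n × Fin (m+1), X u ^ (if ((u.2 : ℕ) < a u.1) then 1 else 0) := by
  rw [polar, Fintype.prod_prod_type]
  apply Finset.prod_congr rfl
  intro i _
  rw [Finset.prod_filter]
  apply Finset.prod_congr rfl
  intro j _
  split_ifs <;> simp

/-- the height of a monomial ideal equals the height of its
polarization. -/
theorem ht_polarIdeal (k : Type) [Field k] (m n q : ℕ) (A : Fin q → Fin n → ℕ)
    (hA : ∀ t i, A t i ≤ m + 1) :
    ht (monIdeal k A) = ht (polarIdeal k m A) := by
  classical
  apply le_antisymm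
  · -- ht (monIdeal) ≤ ht (polarIdeal)
    refine le_iInf₂ fun Q hQ => ?_
    set S' : Finset (Fin n × Fin (m+1)) :=
      Finset.univ.filter (fun u => (X u : MvPolynomial (Fin n × Fin (m+1)) k) ∈ Q.asIdeal) with hS'
    have hS'Q : vp (k := k) S' ≤ Q.asIdeal := by
      rw [vp, Ideal.span_le]
      rintro _ ⟨u, hu, rfl⟩
      exact (Finset.mem_filter.mp (Finset.mem_coe.mp hu)).2
    have hcover : ∀ t, ∃ u : Fin n × Fin (m+1), u ∈ S' ∧ ((u.2 : ℕ) < A t u.1) := by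
      intro t
      have hmem : polar k m (A t) ∈ Q.asIdeal := hQ (Ideal.subset_span ⟨t, rfl⟩)
      rw [polar_eq_prod] at hmem
      obtain ⟨u, hXu, hu⟩ := (prod_pow_mem_prime_iff _).mp hmem
      refine ⟨u, Finset.mem_filter.mpr ⟨Finset.mem_univ _, hXu⟩, ?_⟩
      by_contra hlt
      simp [hlt] at hu
    set S : Finset (Fin n) := S'.image Prod.fst with hS
    have hIS : monIdeal k A ≤ vp (k := k) S := by
      rw [monIdeal, Ideal.span_le]
      rintro _ ⟨t, rfl⟩
      show mon k (A t) ∈ vp (k := k) S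
      haveI := vp_isPrime (k := k) S
      rw [mon, prod_pow_mem_prime_iff]
      obtain ⟨u, hu, hlt⟩ := hcover t
      exact ⟨u.1, X_mem_vp_iff.mpr (Finset.mem_image_of_mem _ hu), by omega⟩
    calc ht (monIdeal k A) ≤ Order.height (vpt (k := k) S) := iInf₂_le (vpt (k := k) S) hIS
      _ ≤ (S.card : ℕ∞) := height_le_card S
      _ ≤ (S'.card : ℕ∞) := by exact_mod_cast Finset.card_image_le
      _ ≤ Order.height Q := height_ge S' Q hS'Q
  · -- ht (polarIdeal) ≤ ht (monIdeal)
    refine le_iInf₂ fun P hP => ?_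
    set S : Finset (Fin n) :=
      Finset.univ.filter (fun i => (X i : MvPolynomial (Fin n) k) ∈ P.asIdeal) with hS
    have hSP : vp (k := k) S ≤ P.asIdeal := by
      rw [vp, Ideal.span_le]
      rintro _ ⟨i, hi, rfl⟩
      exact (Finset.mem_filter.mp (Finset.mem_coe.mp hi)).2
    have hcover : ∀ t, ∃ i : Fin n, i ∈ S ∧ A t i ≠ 0 := by
      intro t
      have hmem : mon k (A t) ∈ P.asIdeal := hP (Ideal.subset_span ⟨t, rfl⟩)
      rw [mon] at hmem
      obtain ⟨i, hXi, hi⟩ := (prod_pow_mem_prime_iff _).mp hmem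
      exact ⟨i, Finset.mem_filter.mpr ⟨Finset.mem_univ _, hXi⟩, hi⟩
    set S' : Finset (Fin n × Fin (m+1)) := S.image (fun i => (i, (0 : Fin (m+1)))) with hS'
    have hJS : polarIdeal k m A ≤ vp (k := k) S' := by
      rw [polarIdeal, Ideal.span_le]
      rintro _ ⟨t, rfl⟩
      show polar k m (A t) ∈ vp (k := k) S'
      haveI := vp_isPrime (k := k) S'
      rw [polar_eq_prod, prod_pow_mem_prime_iff]
      obtain ⟨i, hi, hne⟩ := hcover t
      refine ⟨(i, 0), X_mem_vp_iff.mpr (Finset.mem_image_of_mem _ hi), ?_⟩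
      have : (((0 : Fin (m+1)) : ℕ) < A t i) := by
        simp only [Fin.val_zero]
        omega
      simp only [this, if_true]
      exact one_ne_zero
    have hcard : S'.card = S.card :=
      Finset.card_image_of_injective _ (fun a b hab => by
        simpa [Prod.ext_iff] using hab)
    calc ht (polarIdeal k m A) ≤ Order.height (vpt (k := k) S') :=
          iInf₂_le (vpt (k := k) S') hJS
      _ ≤ (S'.card : ℕ∞) := height_le_card S'
      _ = (S.card : ℕ∞) := by rw [hcard]
      _ ≤ Order.height P := height_ge S P hSP
end

section
/- If I = (x_{i_1}^{a_1},...,x_{i_r}^{a_r}) is a monomial ideal generated by pure powers of distinct variables, then its polarization has the decomposition P(I) = ∩ (x_{i_1,c_1},...,x_{i_r,c_r}), where the intersection is over all tuples (c_1,...,c_r) with 1 ≤ c_j ≤ a_j for each j. -/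
/-!
Membership in a monomial ideal is decided monomial by monomial: a polynomial lies in it iff every
monomial of its support is divisible by a generator. A monomial is divisible by the squarefree
generator `∏_{c ∈ F j} x_{g j c}` iff it involves each of these variables, and it lies in the prime
ideal `(x_{g j (c j)})_j` iff it involves one of them. The decomposition is therefore the
distributive law `(∃ j, ∀ c ∈ F j, P j c) ↔ ∀ choice functions c, ∃ j, P j (c j)`.
-/

open MvPolynomial

theorem exists_forall_iff_forall_choice {ι τ : Type*} (F : ι → Set τ) (P : ι → τ → Prop) :
    (∃ j, ∀ c ∈ F j, P j c) ↔ ∀ c : ι → τ, (∀ j, c j ∈ F j) → ∃ j, P j (c j) := by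
  refine ⟨fun ⟨j, hj⟩ c hc => ⟨j, hj _ (hc j)⟩, fun h => ?_⟩
  by_contra! hne
  obtain ⟨c, hc⟩ := Classical.skolem.1 hne
  obtain ⟨j, hj⟩ := h c fun j => (hc j).1
  exact (hc j).2 hj

namespace MvPolynomial

variable {σ R : Type*} [CommSemiring R]

theorem sum_single_one_le_iff (S : Finset σ) (d : σ →₀ ℕ) :
    ∑ v ∈ S, Finsupp.single v 1 ≤ d ↔ ∀ v ∈ S, d v ≠ 0 := by
  classical
  simp only [Finsupp.le_def, Finsupp.finsetSum_apply, Finsupp.single_apply, Finset.sum_ite_eq']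
  refine ⟨fun h v hv => ?_, fun h v => ?_⟩
  · simpa [hv, Nat.one_le_iff_ne_zero] using h v
  · split_ifs with hv
    · exact Nat.one_le_iff_ne_zero.2 (h v hv)
    · exact Nat.zero_le _

theorem prod_X_eq_monomial (S : Finset σ) :
    ∏ v ∈ S, (X v : MvPolynomial σ R) = monomial (∑ v ∈ S, Finsupp.single v 1) 1 := by
  rw [monomial_sum_one]
  rfl

theorem mem_span_range_prod_X_iff {ι : Type*} (S : ι → Finset σ) (p : MvPolynomial σ R) :
    p ∈ Ideal.span (Set.range fun j => ∏ v ∈ S j, X v) ↔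
      ∀ d ∈ p.support, ∃ j, ∀ v ∈ S j, d v ≠ 0 := by
  simp_rw [prod_X_eq_monomial]
  rw [Set.range_comp' (fun t => monomial t (1 : R)), mem_ideal_span_monomial_image]
  simp only [Set.exists_range_iff, sum_single_one_le_iff]

theorem mem_span_range_X_iff {ι : Type*} (f : ι → σ) (p : MvPolynomial σ R) :
    p ∈ Ideal.span (Set.range fun j => (X (f j) : MvPolynomial σ R)) ↔
      ∀ d ∈ p.support, ∃ j, d (f j) ≠ 0 := by
  rw [Set.range_comp' X f, mem_ideal_span_X_image]
  simp only [Set.exists_range_iff]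

theorem span_range_prod_X_eq_iInf {ι τ : Type*} (F : ι → Finset τ) (g : ι → τ → σ)
    (hg : ∀ j, Set.InjOn (g j) (F j)) :
    Ideal.span (Set.range fun j => ∏ c ∈ F j, (X (g j c) : MvPolynomial σ R)) =
      ⨅ c ∈ {c : ι → τ | ∀ j, c j ∈ F j}, Ideal.span (Set.range fun j => X (g j (c j))) := by
  classical
  have hprod j : ∏ c ∈ F j, (X (g j c) : MvPolynomial σ R) = ∏ v ∈ (F j).image (g j), X v :=
    (Finset.prod_image (hg j)).symm
  ext p
  simp only [hprod, mem_span_range_prod_X_iff, Ideal.mem_iInf, mem_span_range_X_iff,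
    Finset.forall_mem_image]
  have distrib (d : σ →₀ ℕ) :=
    exists_forall_iff_forall_choice (fun j => (F j : Set τ)) fun j c => d (g j c) ≠ 0
  exact ⟨fun h c hc d hd => (distrib d).1 (h d hd) c hc,
    fun h d hd => (distrib d).2 fun c hc => h c hc d hd⟩

end MvPolynomial

theorem polar_pure_powers_decomposition_general (k : Type) [Field k] (m n r : ℕ)
    (ι : Fin r → Fin n)
    (a : Fin r → ℕ) :
    Ideal.span (Set.range fun j =>
        ∏ c ∈ Finset.univ.filter fun c : Fin (m + 1) => (c : ℕ) < a j,
          (X (ι j, c) : MvPolynomial (Fin n × Fin (m + 1)) k)) =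
      ⨅ c ∈ {c : Fin r → Fin (m + 1) | ∀ j, (c j : ℕ) < a j},
        Ideal.span (Set.range fun j =>
          (X (ι j, c j) : MvPolynomial (Fin n × Fin (m + 1)) k)) := by
  simpa only [Finset.mem_filter, Finset.mem_univ, true_and] using
    span_range_prod_X_eq_iInf (fun j => Finset.univ.filter fun c : Fin (m + 1) => (c : ℕ) < a j)
      (fun j c => (ι j, c)) fun j => (Prod.mk_right_injective (ι j)).injOn

/-- for `I = (x_{i₁}^{a₁},…,x_{i_r}^{a_r})` with distinct variables,
`𝒫(I) = ⋂_{1 ≤ c_j ≤ a_j} (x_{i₁,c₁},…,x_{i_r,c_r})` (indices `c` taken 0-based). -/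
theorem polar_pure_powers_decomposition (k : Type) [Field k] (m n r : ℕ)
    (ι : Fin r → Fin n) (hι : Function.Injective ι)
    (a : Fin r → ℕ) (hpos : ∀ j, 0 < a j) (hbd : ∀ j, a j ≤ m + 1) :
    Ideal.span (Set.range fun j =>
        ∏ c ∈ Finset.univ.filter fun c : Fin (m + 1) => (c : ℕ) < a j,
          (X (ι j, c) : MvPolynomial (Fin n × Fin (m + 1)) k)) =
      ⨅ c ∈ {c : Fin r → Fin (m + 1) | ∀ j, (c j : ℕ) < a j},
        Ideal.span (Set.range fun j =>
          (X (ι j, c j) : MvPolynomial (Fin n × Fin (m + 1)) k)) :=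
  polar_pure_powers_decomposition_general k m n r ι a
end

section
/- If I = (x_1,...,x_r)^m is the m-th power of the prime generated by variables x_1,...,x_r, then its polarization has irredundant irreducible primary decomposition P(I) = ∩ (x_{1,c_1},...,x_{r,c_r}), where the intersection runs over all tuples (c_1,...,c_r) with 1 ≤ c_j ≤ m for all j and c_1 + ... + c_r ≤ m + r − 1. -/
/-!
Both sides are monomial ideals, so membership is decided monomial by monomial. A monomial with
exponent `v` is divisible by the polarization of some `x^b` with `∑ bᵢ = m` iff the initial runs
`Bᵢ` of nonzero exponents in the rows `v (i, ·)` satisfy `∑ Bᵢ ≥ m`; if instead `∑ Bᵢ < m`, then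
`c = B` is an admissible tuple whose graph the monomial misses. For irredundancy, the product of all
variables off the graph of `c` lies in every other `(x_{i, c' i})` but not in `(x_{i, c i})`.
-/

open MvPolynomial Finset

section Combinatorics

variable {ι : Type*} [Fintype ι]

theorem exists_le_sum_eq_of_le_sum {B : ι → ℕ} {m : ℕ} (h : m ≤ ∑ i, B i) :
    ∃ b ≤ B, ∑ i, b i = m := by
  classical
  induction m with
  | zero => exact ⟨0, fun _ => Nat.zero_le _, by simp⟩
  | succ m ih =>
    obtain ⟨b, hbB, hb⟩ := ih (by omega)
    obtain ⟨i, -, hi⟩ := exists_lt_of_sum_lt (hb ▸ h : ∑ j, b j < ∑ j, B j)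
    refine ⟨b + Pi.single i 1, fun j => ?_, by simp [sum_add_distrib, hb]⟩
    by_cases hj : j = i
    · subst hj
      simpa using hi
    · simpa [hj] using hbB j

theorem exists_initial_run {m : ℕ} (P : Fin m → Prop) :
    ∃ n ≤ m, (∀ j : Fin m, (j : ℕ) < n → P j) ∧ ∀ h : n < m, ¬ P ⟨n, h⟩ := by
  classical
  set Q : ℕ → Prop := fun n => ∀ j : Fin m, (j : ℕ) < n → P j
  have hQ : Q (Nat.findGreatest Q m) :=
    Nat.findGreatest_spec (Nat.zero_le m) fun j hj => absurd hj (Nat.not_lt_zero _)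
  refine ⟨_, Nat.findGreatest_le m, hQ, fun h hP => ?_⟩
  refine Nat.findGreatest_is_greatest (Nat.lt_succ_self _) h fun j hj => ?_
  rcases (Nat.lt_succ_iff.mp hj).lt_or_eq with hj | hj
  · exact hQ j hj
  · exact (Fin.ext hj : j = ⟨_, h⟩) ▸ hP

end Combinatorics

section Polarization

variable {ι : Type*} [Fintype ι] {m : ℕ}

noncomputable def polarizationExp (m : ℕ) (b : ι → ℕ) : ι × Fin m →₀ ℕ :=
  Finsupp.equivFunOnFinite.symm fun p => if (p.2 : ℕ) < b p.1 then 1 else 0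

theorem prod_X_eq_monomial_polarizationExp {R : Type*} [CommSemiring R] (b : ι → ℕ) :
    ∏ i, ∏ j ∈ univ.filter fun j : Fin m => (j : ℕ) < b i, (X (i, j) : MvPolynomial (ι × Fin m) R) =
      monomial (polarizationExp m b) 1 := by
  rw [monomial_eq, C_1, one_mul, Finsupp.prod_fintype _ _ fun _ => pow_zero _,
    Fintype.prod_prod_type]
  simp [polarizationExp, prod_filter]

theorem polarizationExp_le_iff {b : ι → ℕ} {v : ι × Fin m →₀ ℕ} :
    polarizationExp m b ≤ v ↔ ∀ i (j : Fin m), (j : ℕ) < b i → v (i, j) ≠ 0 := by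
  simp only [Finsupp.le_def, Prod.forall, polarizationExp, Finsupp.coe_equivFunOnFinite_symm]
  refine forall₂_congr fun i j => ?_
  split_ifs <;> simp [Nat.one_le_iff_ne_zero, *]

theorem exists_polarizationExp_le_iff (v : ι × Fin m →₀ ℕ) :
    (∃ b : ι → ℕ, ∑ i, b i = m ∧ polarizationExp m b ≤ v) ↔
      ∀ c : ι → Fin m, ∑ i, (c i : ℕ) < m → ∃ i, v (i, c i) ≠ 0 := by
  simp only [polarizationExp_le_iff]
  constructor
  · rintro ⟨b, rfl, hb⟩ c hc
    obtain ⟨i, -, hi⟩ := exists_lt_of_sum_lt hc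
    exact ⟨i, hb i (c i) hi⟩
  · intro h
    choose B _ hBrun hBstop using fun i => exists_initial_run fun j : Fin m => v (i, j) ≠ 0
    have hsum : m ≤ ∑ i, B i := by
      by_contra! hlt
      have hB (i : ι) : B i < m :=
        (single_le_sum (fun j _ => Nat.zero_le (B j)) (mem_univ i)).trans_lt hlt
      obtain ⟨i, hi⟩ := h (fun i => ⟨B i, hB i⟩) hlt
      exact hBstop i (hB i) hi
    obtain ⟨b, hbB, hb⟩ := exists_le_sum_eq_of_le_sum hsum
    exact ⟨b, hb, fun i j hj => hBrun i j (hj.trans_le (hbB i))⟩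

end Polarization

section VariableIdeals

variable {σ R : Type*}

theorem isPrime_span_X_image [CommRing R] [IsDomain R] (s : Set σ) :
    (Ideal.span (X '' s : Set (MvPolynomial σ R))).IsPrime := by
  classical
  set P := Ideal.span (X '' s : Set (MvPolynomial σ R))
  set kill : MvPolynomial σ R →ₐ[R] MvPolynomial σ R := aeval fun p => if p ∈ s then 0 else X p
  -- `kill` is the identity modulo `P`, so its kernel is `P`
  have hkill : (Ideal.Quotient.mkₐ R P).comp kill = Ideal.Quotient.mkₐ R P := by
    refine algHom_ext fun p => ?_
    by_cases hp : p ∈ s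
    · simpa [kill, hp, eq_comm (a := (0 : MvPolynomial σ R ⧸ P)), Ideal.Quotient.eq_zero_iff_mem]
        using Ideal.subset_span (Set.mem_image_of_mem X hp)
    · simp [kill, hp]
  have hker : P = RingHom.ker kill := by
    refine le_antisymm (Ideal.span_le.mpr ?_) fun f hf => ?_
    · rintro _ ⟨p, hp, rfl⟩
      simp [kill, hp]
    · rw [← Ideal.Quotient.eq_zero_iff_mem, ← Ideal.Quotient.mkₐ_eq_mk R, ← hkill,
        AlgHom.comp_apply, (RingHom.mem_ker).mp hf, map_zero]
  rw [hker]
  exact RingHom.ker_isPrime _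

end VariableIdeals

section GraphIdeal

variable {ι κ : Type*} (R : Type*)

noncomputable def graphIdeal [CommSemiring R] (c : ι → κ) : Ideal (MvPolynomial (ι × κ) R) :=
  Ideal.span (Set.range fun i => X (i, c i))

variable {R}

theorem graphIdeal_eq_span_X_image [CommSemiring R] (c : ι → κ) :
    graphIdeal R c = Ideal.span (X '' Set.range fun i => (i, c i)) := by
  rw [graphIdeal, ← Set.range_comp]
  rfl

theorem mem_graphIdeal_iff [CommSemiring R] {c : ι → κ} {f : MvPolynomial (ι × κ) R} :
    f ∈ graphIdeal R c ↔ ∀ v ∈ f.support, ∃ i, v (i, c i) ≠ 0 := by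
  simp [graphIdeal_eq_span_X_image, mem_ideal_span_X_image]

theorem graphIdeal_isPrime [CommRing R] [IsDomain R] (c : ι → κ) : (graphIdeal R c).IsPrime := by
  rw [graphIdeal_eq_span_X_image]
  exact isPrime_span_X_image _

theorem monomial_mem_graphIdeal_iff [CommSemiring R] {c : ι → κ} {v : ι × κ →₀ ℕ} {a : R}
    (ha : a ≠ 0) : monomial v a ∈ graphIdeal R c ↔ ∃ i, v (i, c i) ≠ 0 := by
  classical
  rw [mem_graphIdeal_iff, support_monomial, if_neg ha]
  simp

theorem iInf_graphIdeal_diff_not_le [CommSemiring R] [Nontrivial R] [Finite ι] [Finite κ]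
    [DecidableEq κ] (S : Set (ι → κ)) (c : ι → κ) :
    ¬ ⨅ c' ∈ S \ {c}, graphIdeal R c' ≤ graphIdeal R c := by
  set offGraph : ι × κ →₀ ℕ :=
    Finsupp.equivFunOnFinite.symm fun p => if p.2 = c p.1 then 0 else 1
  have hoff (c' : ι → κ) : monomial offGraph (1 : R) ∈ graphIdeal R c' ↔ c' ≠ c := by
    simp [monomial_mem_graphIdeal_iff, offGraph, Function.ne_iff]
  intro hle
  refine (hoff c).mp (hle (Ideal.mem_iInf.mpr fun c' => Ideal.mem_iInf.mpr fun hc' => ?_)) rfl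
  exact (hoff c').mpr hc'.2

end GraphIdeal

section PolarizationIdeal

variable (R : Type*) [CommSemiring R] (ι : Type*) [Fintype ι] (m : ℕ)

noncomputable def polarizationPowIdeal : Ideal (MvPolynomial (ι × Fin m) R) :=
  Ideal.span {f | ∃ b : ι → ℕ, ∑ i, b i = m ∧
    f = ∏ i, ∏ j ∈ univ.filter fun j : Fin m => (j : ℕ) < b i, X (i, j)}

variable {R ι m}

theorem mem_polarizationPowIdeal_iff {f : MvPolynomial (ι × Fin m) R} :
    f ∈ polarizationPowIdeal R ι m ↔
      ∀ v ∈ f.support, ∃ b : ι → ℕ, ∑ i, b i = m ∧ polarizationExp m b ≤ v := by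
  have hgens : {f : MvPolynomial (ι × Fin m) R | ∃ b : ι → ℕ, ∑ i, b i = m ∧
      f = ∏ i, ∏ j ∈ univ.filter fun j : Fin m => (j : ℕ) < b i, X (i, j)} =
      (monomial · 1) '' (polarizationExp m '' {b | ∑ i, b i = m}) := by
    ext f
    simp [prod_X_eq_monomial_polarizationExp, eq_comm]
  simp [polarizationPowIdeal, hgens, mem_ideal_span_monomial_image]

variable (R ι m)

theorem polarizationPowIdeal_eq_iInf_graphIdeal :
    polarizationPowIdeal R ι m = ⨅ c ∈ {c : ι → Fin m | ∑ i, (c i : ℕ) < m}, graphIdeal R c := by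
  ext f
  simp only [mem_polarizationPowIdeal_iff, Ideal.mem_iInf, mem_graphIdeal_iff,
    exists_polarizationExp_le_iff, Set.mem_ofPred_eq]
  exact ⟨fun h c hc v hv => h v hv c hc, fun h v hv c hc => h c hc v hv⟩

end PolarizationIdeal

/-- for `I = (x_1,…,x_r)^m` (`m ≥ 1`), the polarization
`𝒫(I)` (generated by the polarizations of all monomials of degree `m` in
`x_1,…,x_r`) has the irredundant irreducible primary decomposition
`𝒫(I) = ⋂ (x_{1,c₁},…,x_{r,c_r})`, the intersection running over all tuples `c`
with `1 ≤ c_j ≤ m` and `∑ c_j ≤ m + r − 1` (here the `c_j` are 0-based, so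
`c_j ∈ Fin m` and the degree condition reads `∑ (c_j + 1) ≤ m + r − 1`). -/
theorem polar_power_of_prime_decomposition (k : Type) [Field k] (r m : ℕ)
    (hm : 0 < m) :
    Ideal.span {f : MvPolynomial (Fin r × Fin m) k | ∃ b : Fin r → ℕ,
        (∑ i, b i) = m ∧
        f = ∏ i, ∏ j ∈ Finset.univ.filter fun j : Fin m => (j : ℕ) < b i, X (i, j)} =
      (⨅ c ∈ {c : Fin r → Fin m | (∑ i, ((c i : ℕ) + 1)) ≤ m + r - 1},
        Ideal.span (Set.range fun i => (X (i, c i) : MvPolynomial (Fin r × Fin m) k))) ∧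
    (∀ c ∈ {c : Fin r → Fin m | (∑ i, ((c i : ℕ) + 1)) ≤ m + r - 1},
      (Ideal.span (Set.range fun i =>
        (X (i, c i) : MvPolynomial (Fin r × Fin m) k))).IsPrime) ∧
    (∀ c ∈ {c : Fin r → Fin m | (∑ i, ((c i : ℕ) + 1)) ≤ m + r - 1},
      ¬ (⨅ c' ∈ {c' : Fin r → Fin m |
            (∑ i, ((c' i : ℕ) + 1)) ≤ m + r - 1} \ {c},
          Ideal.span (Set.range fun i =>
            (X (i, c' i) : MvPolynomial (Fin r × Fin m) k))) ≤
        Ideal.span (Set.range fun i =>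
          (X (i, c i) : MvPolynomial (Fin r × Fin m) k))) := by
  have hadm : {c : Fin r → Fin m | ∑ i, ((c i : ℕ) + 1) ≤ m + r - 1} =
      {c | ∑ i, (c i : ℕ) < m} := by
    ext c
    simp only [Set.mem_ofPred_eq, sum_add_distrib, sum_const, card_univ, Fintype.card_fin,
      smul_eq_mul, mul_one]
    omega
  rw [hadm]
  exact ⟨polarizationPowIdeal_eq_iInf_graphIdeal k (Fin r) m, fun c _ => graphIdeal_isPrime c,
    fun c _ => iInf_graphIdeal_diff_not_le _ c⟩
end

section
/- Let I be a monomial ideal whose polarization P(I) is the facet ideal of a simplicial tree. Then for any prime ideal p containing I, the polarization P(I_p) of the localization is the facet ideal of a simplicial forest. -/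
open MvPolynomial

/-- The vertex support of the polarization of the monomial with exponent vector `a`:
the facet `{(i,j) | j < a_i}` on the vertex set of doubly-indexed variables. -/
def suppF (m : ℕ) {n : ℕ} (a : Fin n → ℕ) : Finset (Fin n × Fin (m + 1)) :=
  Finset.univ.filter fun v => (v.2 : ℕ) < a v.1

/-- `F` is a leaf of the simplicial complex with facet set `Δ`: either `F` is the
only facet, or there is another facet `G` containing `F ∩ (Δ ∖ F)`. -/
def IsLeaf {V : Type} [DecidableEq V] (Δ : Finset (Finset V)) (F : Finset V) : Prop :=
  F ∈ Δ ∧ (Δ = {F} ∨ ∃ G ∈ Δ.erase F, ∀ H ∈ Δ.erase F, F ∩ H ⊆ G)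

/-- A simplicial complex (given by its facet set) is a forest if every nonempty
subcollection has a leaf. -/
def IsForest {V : Type} [DecidableEq V] (Δ : Finset (Finset V)) : Prop :=
  ∀ Γ ⊆ Δ, Γ.Nonempty → ∃ F, IsLeaf Γ F

/-- A tree is a connected forest: connectivity is expressed by chains of facets with
consecutive nonempty intersections. -/
def IsTree {V : Type} [DecidableEq V] (Δ : Finset (Finset V)) : Prop :=
  IsForest Δ ∧ ∀ F ∈ Δ, ∀ G ∈ Δ,
    Relation.ReflTransGen (fun a b : Finset V => a ∈ Δ ∧ b ∈ Δ ∧ (a ∩ b).Nonempty) F G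

/-- The facet complex of the polarization `𝒫(I)` of the monomial ideal with
exponent vectors `A`. -/
def facetComplex (m : ℕ) {n q : ℕ} (A : Fin q → Fin n → ℕ) :
    Finset (Finset (Fin n × Fin (m + 1))) :=
  Finset.image (fun t => suppF m (A t)) Finset.univ

/-!
Localizing at `p` deletes the variables outside `p`, so on the level of facets it is the
restriction `F ↦ F ∩ S` to the vertices `S` lying over `p`. Restriction preserves intersections,
and a leaf of a subcollection survives restriction as long as distinct facets of that
subcollection stay distinct; since every subcollection of the restricted complex lifts
injectively to one of the original tree, the restricted complex is a forest. Keeping only the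
minimal facets passes to a subcollection, which is again a forest.
-/

open Finset

section Forest

variable {V W : Type} [DecidableEq V] [DecidableEq W]

theorem IsForest.mono {Δ Γ : Finset (Finset V)} (hΔ : IsForest Δ) (hΓ : Γ ⊆ Δ) :
    IsForest Γ :=
  fun Γ' hΓ' hne => hΔ Γ' (hΓ'.trans hΓ) hne

theorem IsLeaf.image_of_injOn {f : Finset V → Finset W}
    (hf : ∀ A B, f (A ∩ B) = f A ∩ f B) {Γ : Finset (Finset V)} (hinj : Set.InjOn f Γ)
    {F : Finset V} (hF : IsLeaf Γ F) : IsLeaf (Γ.image f) (f F) := by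
  have hmono : ∀ {A B}, A ⊆ B → f A ⊆ f B := fun {A B} hAB => by
    rw [← inter_eq_left.mpr hAB, hf]
    exact inter_subset_right
  obtain ⟨hFΓ, hsingle | ⟨G, hG, hFG⟩⟩ := hF
  · exact ⟨mem_image_of_mem f hFΓ, Or.inl (by simp [hsingle])⟩
  · obtain ⟨hGF, hGΓ⟩ := mem_erase.mp hG
    refine ⟨mem_image_of_mem f hFΓ, Or.inr ⟨f G, ?_, ?_⟩⟩
    · exact mem_erase.mpr ⟨fun h => hGF (hinj hGΓ hFΓ h), mem_image_of_mem f hGΓ⟩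
    · intro H' hH'
      obtain ⟨hH'F, hH'Γ⟩ := mem_erase.mp hH'
      obtain ⟨H, hHΓ, rfl⟩ := mem_image.mp hH'Γ
      have hHF : H ≠ F := fun h => hH'F (h ▸ rfl)
      rw [← hf]
      exact hmono (hFG H (mem_erase.mpr ⟨hHF, hHΓ⟩))

theorem IsForest.image {f : Finset V → Finset W} (hf : ∀ A B, f (A ∩ B) = f A ∩ f B)
    {Δ : Finset (Finset V)} (hΔ : IsForest Δ) : IsForest (Δ.image f) := by
  intro Γ hΓ hne
  have hsurj : Set.SurjOn f Δ Γ := fun γ hγ => by simpa using hΓ hγ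
  obtain ⟨Γ', hΓ'Δ, hinj, rfl⟩ := exists_subset_injOn_image_eq_of_surjOn _ Γ hsurj
  obtain ⟨F, hF⟩ := hΔ Γ' (by exact_mod_cast hΓ'Δ) (image_nonempty.mp hne)
  exact ⟨f F, hF.image_of_injOn hf hinj⟩

end Forest

theorem suppF_ite_eq_filter (m : ℕ) {n : ℕ} (a : Fin n → ℕ) (P : Fin n → Prop)
    [DecidablePred P] :
    suppF m (fun i => if P i then a i else 0) = (suppF m a).filter fun v => P v.1 := by
  ext v
  by_cases h : P v.1 <;> simp [suppF, h]

open Classical in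
theorem polar_localization_forest_general (k : Type) [Field k] (m n q : ℕ)
    (A : Fin q → Fin n → ℕ)
    (hTree : IsTree (facetComplex m A))
    (p : Ideal (MvPolynomial (Fin n) k)) :
    IsForest ((Finset.image (fun t => suppF m (fun i =>
        if (X i : MvPolynomial (Fin n) k) ∈ p then A t i else 0)) Finset.univ).filter
      fun F => ∀ G ∈ Finset.image (fun t => suppF m (fun i =>
          if (X i : MvPolynomial (Fin n) k) ∈ p then A t i else 0)) Finset.univ,
        G ⊆ F → G = F) := by
  have hloc : Finset.image (fun t => suppF m (fun i =>
        if (X i : MvPolynomial (Fin n) k) ∈ p then A t i else 0)) Finset.univ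
      = (facetComplex m A).image (filter fun v => (X v.1 : MvPolynomial (Fin n) k) ∈ p) := by
    simp only [facetComplex, image_image, suppF_ite_eq_filter]
    rfl
  rw [hloc]
  exact (hTree.1.image fun _ _ => filter_inter_distrib ..).mono (filter_subset _ _)

open Classical in
/-- if `𝒫(I)` is the facet ideal of a simplicial tree, then for any
prime `p ⊇ I`, the polarization of the localization `I_p` (obtained by deleting from
the generators the variables not in `p`) is the facet ideal of a forest (its facets
being the minimal supports among the polarized localized generators). -/
theorem polar_localization_forest (k : Type) [Field k] (m n q : ℕ)
    (A : Fin q → Fin n → ℕ) (hA : ∀ t i, A t i ≤ m + 1)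
    (hmin : ∀ t t', suppF m (A t) ⊆ suppF m (A t') → t = t')
    (hTree : IsTree (facetComplex m A))
    (p : Ideal (MvPolynomial (Fin n) k)) (hp : p.IsPrime) (hIp : monIdeal k A ≤ p) :
    IsForest ((Finset.image (fun t => suppF m (fun i =>
        if (X i : MvPolynomial (Fin n) k) ∈ p then A t i else 0)) Finset.univ).filter
      fun F => ∀ G ∈ Finset.image (fun t => suppF m (fun i =>
          if (X i : MvPolynomial (Fin n) k) ∈ p then A t i else 0)) Finset.univ,
        G ⊆ F → G = F) :=
  polar_localization_forest_general k m n q A hTree p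
end

section
/- Let I = (M_1,...,M_q) be a monomial ideal minimally generated by the monomials M_i, and suppose P(I) is the facet ideal of a simplicial complex Δ that has a leaf whose joint corresponds to P(M_1). Then height I = height (M_2,...,M_q). -/
open MvPolynomial

/-!
The inclusion `(M₂,…,M_q) ⊆ I` gives one inequality. Conversely let `p ⊇ (M₂,…,M_q)` be prime;
if `M₁ ∈ p` then `I ⊆ p`. Otherwise `p` contains a variable `x_v` of the leaf, and `x_v ∤ M₁`.
Pick `x_w` dividing both the leaf and the joint `M₁`. A generator divisible by `x_v` but not by
`x_w` has a facet other than the leaf sharing the vertex `x_v` with it, so `x_v` would divide the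
joint; hence every generator divisible by `x_v` is divisible by `x_w`. Therefore the automorphism
swapping `x_v` and `x_w` carries `p` to a prime of the same height containing `I`.
-/

theorem Ideal.IsPrime.prod_pow_mem_iff {R ι : Type*} [CommRing R] {p : Ideal R} [hp : p.IsPrime]
    (s : Finset ι) (f : ι → R) (a : ι → ℕ) :
    ∏ i ∈ s, f i ^ a i ∈ p ↔ ∃ i ∈ s, 0 < a i ∧ f i ∈ p := by
  rw [Ideal.IsPrime.prod_mem_iff]
  refine exists_congr fun i => and_congr_right fun _ => ?_
  rcases (a i).eq_zero_or_pos with ha | ha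
  · simp [ha, hp.ne_top, ← Ideal.eq_top_iff_one]
  · simp [ha, hp.pow_mem_iff_mem _ ha]

section Height

variable {R : Type} [CommRing R]

theorem ht_le_ht_of_forall_exists {I J : Ideal R}
    (h : ∀ p : PrimeSpectrum R, J ≤ p.asIdeal →
      ∃ p' : PrimeSpectrum R, I ≤ p'.asIdeal ∧ Order.height p' ≤ Order.height p) :
    ht I ≤ ht J :=
  le_iInf₂ fun p hp => by
    obtain ⟨p', hp', hle⟩ := h p hp
    exact (iInf₂_le p' hp').trans hle

theorem ht_mono {I J : Ideal R} (h : I ≤ J) : ht I ≤ ht J :=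
  ht_le_ht_of_forall_exists fun p hp => ⟨p, h.trans hp, le_rfl⟩

end Height

section Monomial

variable {k : Type} [Field k] {n : ℕ}

theorem rename_mon_mem_iff {τ : Type} {p : Ideal (MvPolynomial τ k)} [p.IsPrime]
    (σ : Fin n → τ) (a : Fin n → ℕ) :
    rename σ (mon k a) ∈ p ↔ ∃ i, 0 < a i ∧ X (σ i) ∈ p := by
  simp [mon, map_prod, Ideal.IsPrime.prod_pow_mem_iff]

theorem mon_mem_iff {p : Ideal (MvPolynomial (Fin n) k)} [p.IsPrime] (a : Fin n → ℕ) :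
    mon k a ∈ p ↔ ∃ i, 0 < a i ∧ X i ∈ p := by
  simpa using rename_mon_mem_iff (p := p) id a

theorem rename_swap_mon_mem {p : Ideal (MvPolynomial (Fin n) k)} [p.IsPrime] {v w : Fin n}
    {a : Fin n → ℕ} (hv : X v ∈ p) (ha : 0 < a w ∨ mon k a ∈ p ∧ a v = 0) :
    rename (Equiv.swap v w) (mon k a) ∈ p := by
  rw [rename_mon_mem_iff]
  by_cases hw : 0 < a w
  · exact ⟨w, hw, by simpa using hv⟩
  obtain ⟨hmem, hav⟩ := ha.resolve_left hw
  obtain ⟨u, hu, hup⟩ := (mon_mem_iff a).1 hmem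
  refine ⟨u, hu, ?_⟩
  rwa [Equiv.swap_apply_of_ne_of_ne (by rintro rfl; omega) (by rintro rfl; exact hw hu)]

variable {q : ℕ}

theorem monIdeal_le_iff {J : Ideal (MvPolynomial (Fin n) k)} {A : Fin q → Fin n → ℕ} :
    monIdeal k A ≤ J ↔ ∀ t, mon k (A t) ∈ J := by
  rw [monIdeal, Ideal.span_le, Set.range_subset_iff]
  rfl

theorem monIdeal_le_iff_fin_succ {J : Ideal (MvPolynomial (Fin n) k)}
    {A : Fin (q + 1) → Fin n → ℕ} :
    monIdeal k A ≤ J ↔ mon k (A 0) ∈ J ∧ monIdeal k (fun t => A t.succ) ≤ J := by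
  simp only [monIdeal_le_iff, Fin.forall_fin_succ]

theorem monIdeal_le_comap_rename_swap {p : Ideal (MvPolynomial (Fin n) k)} [p.IsPrime]
    {A : Fin (q + 1) → Fin n → ℕ} {v w : Fin n} (hp : monIdeal k (fun t => A t.succ) ≤ p)
    (hv : X v ∈ p) (hw : 0 < A 0 w) (hA : ∀ t, 0 < A t w ∨ A t v = 0) :
    monIdeal k A ≤ p.comap (rename (Equiv.swap v w)) := by
  refine monIdeal_le_iff_fin_succ.2 ⟨rename_swap_mon_mem hv (.inl hw), monIdeal_le_iff.2 ?_⟩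
  intro t
  exact rename_swap_mon_mem hv ((hA t.succ).imp_right (⟨monIdeal_le_iff.1 hp t, ·⟩))

end Monomial

section Facets

variable {m n q : ℕ} {A : Fin q → Fin n → ℕ}

theorem mem_suppF_zero {a : Fin n → ℕ} {i : Fin n} : (i, 0) ∈ suppF m a ↔ 0 < a i := by
  simp [suppF]

theorem pos_joint_of_pos_leaf {s j t : Fin q} {i w : Fin n}
    (hjoint : ∀ H ∈ (facetComplex m A).erase (suppF m (A s)), suppF m (A s) ∩ H ⊆ suppF m (A j))
    (hsw : 0 < A s w) (htw : A t w = 0) (hsi : 0 < A s i) (hti : 0 < A t i) : 0 < A j i := by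
  have hts : suppF m (A t) ≠ suppF m (A s) := fun h =>
    (mem_suppF_zero.1 (h ▸ mem_suppF_zero.2 hsw : (w, 0) ∈ suppF m (A t))).ne' htw
  refine mem_suppF_zero.1 (hjoint (suppF m (A t)) ?_ ?_)
  · exact Finset.mem_erase.2 ⟨hts, Finset.mem_image_of_mem _ (Finset.mem_univ t)⟩
  · exact Finset.mem_inter.2 ⟨mem_suppF_zero.2 hsi, mem_suppF_zero.2 hti⟩

end Facets

theorem joint_removal_height_general (k : Type) [Field k] (m n q : ℕ)
    (A : Fin (q + 1) → Fin n → ℕ)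
    (hjoint : ∃ F ∈ facetComplex m A, IsLeaf (facetComplex m A) F ∧
      suppF m (A 0) ∈ (facetComplex m A).erase F ∧
      (∀ H ∈ (facetComplex m A).erase F, F ∩ H ⊆ suppF m (A 0)) ∧
      (F ∩ suppF m (A 0)).Nonempty) :
    ht (monIdeal k A) =
      ht (Ideal.span (Set.range fun t : Fin q => mon k (A t.succ))) := by
  change ht (monIdeal k A) = ht (monIdeal k fun t => A t.succ)
  obtain ⟨_, hF, -, hs0, hjoint, ⟨⟨w, j⟩, hw⟩⟩ := hjoint
  obtain ⟨s, -, rfl⟩ := Finset.mem_image.1 hF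
  obtain ⟨hsw, h0w⟩ : 0 < A s w ∧ 0 < A 0 w := by
    simp only [Finset.mem_inter, suppF, Finset.mem_filter, Finset.mem_univ, true_and] at hw
    omega
  refine le_antisymm (ht_le_ht_of_forall_exists fun p hp => ?_)
    (ht_mono (monIdeal_le_iff_fin_succ.1 le_rfl).2)
  by_cases h0 : mon k (A 0) ∈ p.asIdeal
  · exact ⟨p, monIdeal_le_iff_fin_succ.2 ⟨h0, hp⟩, le_rfl⟩
  obtain ⟨s, rfl⟩ := Fin.exists_succ_eq_of_ne_zero (x := s) (by rintro rfl; simp at hs0)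
  obtain ⟨v, hvs, hv⟩ := (mon_mem_iff _).1 (monIdeal_le_iff.1 hp s)
  have hA : ∀ t, 0 < A t w ∨ A t v = 0 := fun t =>
    or_iff_not_imp_left.2 fun htw => Nat.eq_zero_of_not_pos fun htv =>
      h0 ((mon_mem_iff _).2 ⟨v, pos_joint_of_pos_leaf hjoint hsw (by omega) hvs htv, hv⟩)
  let e := (renameEquiv k (Equiv.swap v w)).toRingEquiv
  exact ⟨PrimeSpectrum.comapEquiv e.symm p,
    monIdeal_le_comap_rename_swap hp hv h0w hA,
    (Order.height_orderIso _ p).le⟩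

/-- if `I = (M₁,…,M_q)` is minimally generated and the facet complex
of `𝒫(I)` has a leaf whose joint is `𝒫(M₁)` (here indexed by `0`), then removing
`M₁` does not change the height: `height I = height (M₂,…,M_q)`. -/
theorem joint_removal_height (k : Type) [Field k] (m n q : ℕ)
    (A : Fin (q + 1) → Fin n → ℕ) (hA : ∀ t i, A t i ≤ m + 1)
    (hmin : ∀ t t', mon k (A t) ∣ mon k (A t') → t = t')
    (hjoint : ∃ F ∈ facetComplex m A, IsLeaf (facetComplex m A) F ∧
      suppF m (A 0) ∈ (facetComplex m A).erase F ∧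
      (∀ H ∈ (facetComplex m A).erase F, F ∩ H ⊆ suppF m (A 0)) ∧
      (F ∩ suppF m (A 0)).Nonempty) :
    ht (monIdeal k A) =
      ht (Ideal.span (Set.range fun t : Fin q => mon k (A t.succ))) :=
  joint_removal_height_general k m n q A hjoint
end
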